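/- arXiv:2011.00761 — 6 statements merged into one kernel-verified Lean document; each statement's English description precedes it below -/
import Mathlib

section
/- Let ε = (ε_0, ε_1, ε_2, ε_3, ε_4) be any bijection from ZMod 5 to {0,1,2,3,4} and let ε' = (ε_1, ε_3, ε_0, ε_2, ε_4). Then 2·(ρ_ε + ρ_{ε'}) = 4 + 6p − Σ_{0 ≤ a < b ≤ 4} g_{ab}. In particular the value ρ_ε + ρ_{ε'} does not depend on the choice of ε. -/
/-- The number of orbits on `V` of the subgroup of the symmetric group on `V`
generated by a set `S` of permutations. -/
noncomputable def numOrbits {V : Type*} [Fintype V] (S : Set (Equiv.Perm V)) : ℕ :=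
  Nat.card (MulAction.orbitRel.Quotient (Subgroup.closure S) V)

/-!
The ten edges of the complete graph on the five colours split into the pentagon `ε_i ε_{i+1}`
and the pentagram `ε_i ε_{i+2}`, and `ε'` traverses the pentagram. As `g` is symmetric, the two
cycle sums in `2 - 2ρ_ε` and `2 - 2ρ_{ε'}` therefore add up to `Σ_{a<b} g_{ab}`.
-/

open Finset

section SymmetricSums

variable {M : Type*} [AddCommMonoid M]

theorem sum_filter_ne_eq_two_nsmul_sum_filter_lt {α : Type*} [Fintype α] [LinearOrder α]
    (h : α → α → M) (hsymm : ∀ a b, h a b = h b a) :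
    ∑ q ∈ univ.filter (fun q : α × α => q.1 ≠ q.2), h q.1 q.2 =
      2 • ∑ q ∈ univ.filter (fun q : α × α => q.1 < q.2), h q.1 q.2 := by
  have hgt : ∑ q ∈ univ.filter (fun q : α × α => q.2 < q.1), h q.1 q.2 =
      ∑ q ∈ univ.filter (fun q : α × α => q.1 < q.2), h q.1 q.2 := by
    rw [sum_filter, sum_filter]
    exact Fintype.sum_equiv (Equiv.prodComm α α) _ _ fun q => by
      simp only [Equiv.prodComm_apply, Prod.fst_swap, Prod.snd_swap, hsymm q.1]; rfl
  rw [two_nsmul]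
  nth_rw 2 [← hgt]
  rw [sum_filter, sum_filter, sum_filter, ← sum_add_distrib]
  refine sum_congr rfl fun q _ => ?_
  rcases lt_trichotomy q.1 q.2 with hlt | heq | hgt
  · simp [hlt, hlt.ne, hlt.not_gt]
  · simp [heq]
  · simp [hgt, hgt.ne', hgt.not_gt]

theorem sum_filter_ne_comp_equiv {α β : Type*} [Fintype α] [Fintype β] [DecidableEq α]
    [DecidableEq β] (e : β ≃ α) (h : α → α → M) :
    ∑ q ∈ univ.filter (fun q : α × α => q.1 ≠ q.2), h q.1 q.2 =
      ∑ r ∈ univ.filter (fun r : β × β => r.1 ≠ r.2), h (e r.1) (e r.2) := by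
  rw [sum_filter, sum_filter]
  exact (Fintype.sum_equiv (e.prodCongr e) _ _ fun r => by simp).symm

theorem sum_filter_ne_eq_sum_sum_add {G : Type*} [AddGroup G] [Fintype G] [DecidableEq G]
    (h : G → G → M) :
    ∑ q ∈ univ.filter (fun q : G × G => q.1 ≠ q.2), h q.1 q.2 =
      ∑ d ∈ univ.filter (· ≠ 0), ∑ i, h i (i + d) := by
  rw [sum_comm]
  simp_rw [sum_filter]
  rw [← Fintype.sum_prod_type']
  exact (Fintype.sum_equiv (Equiv.prodShear (Equiv.refl G) Equiv.addLeft) _ _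
    fun q => by simp).symm

theorem sum_add_neg_eq_sum_add {G : Type*} [AddGroup G] [Fintype G] (h : G → G → M)
    (hsymm : ∀ a b, h a b = h b a) (d : G) :
    ∑ i, h i (i + -d) = ∑ i, h i (i + d) :=
  Fintype.sum_equiv (Equiv.addRight (-d)) _ _ fun i => by simp [hsymm i]

end SymmetricSums

section Pentagon

variable {M : Type*} [AddCommMonoid M]

theorem sum_filter_ne_zmod_five (h : ZMod 5 → ZMod 5 → M) (hsymm : ∀ a b, h a b = h b a) :
    ∑ q ∈ univ.filter (fun q : ZMod 5 × ZMod 5 => q.1 ≠ q.2), h q.1 q.2 =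
      2 • (∑ i, h i (i + 1) + ∑ i, h i (i + 2)) := by
  have hdiffs : univ.filter (· ≠ (0 : ZMod 5)) = {1, 2, -2, -1} := by decide
  rw [sum_filter_ne_eq_sum_sum_add, hdiffs, sum_insert (by decide), sum_insert (by decide),
    sum_insert (by decide), sum_singleton, sum_add_neg_eq_sum_add h hsymm,
    sum_add_neg_eq_sum_add h hsymm, two_nsmul]
  abel

theorem sum_pentagram (h : ZMod 5 → ZMod 5 → M) :
    ∑ i : ZMod 5, h (2 * i + 1) (2 * (i + 1) + 1) = ∑ i, h i (i + 2) :=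
  Fintype.sum_bijective (fun i => 2 * i + 1) (by decide) _ _ fun i => by ring_nf

theorem sum_pentagon_add_sum_pentagram_eq_sum_filter_lt [IsAddTorsionFree M] {α : Type*}
    [Fintype α] [LinearOrder α] (h : α → α → M) (hsymm : ∀ a b, h a b = h b a)
    (ε : ZMod 5 ≃ α) :
    ∑ i, h (ε i) (ε (i + 1)) + ∑ i, h (ε (2 * i + 1)) (ε (2 * (i + 1) + 1)) =
      ∑ q ∈ univ.filter (fun q : α × α => q.1 < q.2), h q.1 q.2 := by
  refine (nsmul_right_inj (n := 2) two_ne_zero).mp ?_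
  rw [← sum_filter_ne_eq_two_nsmul_sum_filter_lt h hsymm, sum_filter_ne_comp_equiv ε,
    sum_filter_ne_zmod_five (fun a b => h (ε a) (ε b)) fun a b => hsymm _ _,
    sum_pentagram fun a b => h (ε a) (ε b)]

end Pentagon

theorem two_mul_rho_add_rho_eq_general
    {V : Type*} [Fintype V]
    (π : Fin 5 → Equiv.Perm V) (p : ℕ)
    (g : Fin 5 → Fin 5 → ℕ)
    (hg : ∀ a b, g a b = numOrbits {π a, π b})
    (ρ : (ZMod 5 → Fin 5) → ℚ)
    (hρ : ∀ f : ZMod 5 → Fin 5,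
      2 - 2 * ρ f = (∑ i : ZMod 5, (g (f i) (f (i + 1)) : ℚ)) - 3 * (p : ℚ))
    (ε : ZMod 5 ≃ Fin 5)
    (ε' : ZMod 5 → Fin 5) (hε' : ∀ i, ε' i = ε (2 * i + 1)) :
    2 * (ρ ⇑ε + ρ ε') = 4 + 6 * (p : ℚ) -
      ∑ q ∈ Finset.univ.filter (fun q : Fin 5 × Fin 5 => q.1 < q.2), (g q.1 q.2 : ℚ) := by
  have hsymm : ∀ a b, (g a b : ℚ) = g b a := fun a b => by rw [hg, hg, Set.pair_comm]
  have hcycles := sum_pentagon_add_sum_pentagram_eq_sum_filter_lt (fun a b => (g a b : ℚ)) hsymm ε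
  have hρε := hρ ε
  have hρε' := hρ ε'
  simp only [hε'] at hρε'
  linarith

/-- Let `(π 0, …, π 4)` encode a regular 5-colored graph on a finite vertex set `V`
with `|V| = 2p`.  For any bijection `ε = (ε_0,…,ε_4) : ZMod 5 ≃ Fin 5`, letting
`ε' = (ε_1, ε_3, ε_0, ε_2, ε_4)`, one has
`2·(ρ_ε + ρ_{ε'}) = 4 + 6p − Σ_{0 ≤ a < b ≤ 4} g_{ab}`.
In particular `ρ_ε + ρ_{ε'}` does not depend on the choice of `ε`. -/
theorem two_mul_rho_add_rho_eq
    {V : Type*} [Fintype V] [DecidableEq V]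
    (π : Fin 5 → Equiv.Perm V) (p : ℕ)
    (hcard : Fintype.card V = 2 * p)
    (hinv : ∀ j, π j * π j = 1)
    (hfpf : ∀ j x, π j x ≠ x)
    (g : Fin 5 → Fin 5 → ℕ)
    (hg : ∀ a b, g a b = numOrbits {π a, π b})
    (ρ : (ZMod 5 → Fin 5) → ℚ)
    (hρ : ∀ f : ZMod 5 → Fin 5,
      2 - 2 * ρ f = (∑ i : ZMod 5, (g (f i) (f (i + 1)) : ℚ)) - 3 * (p : ℚ))
    (ε : ZMod 5 ≃ Fin 5)
    (ε' : ZMod 5 → Fin 5) (hε' : ∀ i, ε' i = ε (2 * i + 1)) :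
    2 * (ρ ⇑ε + ρ ε') = 4 + 6 * (p : ℚ) -
      ∑ q ∈ Finset.univ.filter (fun q : Fin 5 × Fin 5 => q.1 < q.2), (g q.1 q.2 : ℚ) :=
  two_mul_rho_add_rho_eq_general π p g hg ρ hρ ε ε' hε'
end

section
/- Let c ∈ {0,…,d−1} and suppose the graph satisfies the path condition for c, i.e. every orbit of the subgroup generated by π_c and π_d contains exactly 0 or 2 fixed points of π_d. Then there exists a unique fixed-point-free involution π̃ of V such that π̃ agrees with π_d outside Fix(π_d) and, for every x ∈ Fix(π_d), π̃(x) is a fixed point of π_d distinct from x lying in the ⟨π_c, π_d⟩-orbit of x. Moreover Fix(π_d) is invariant under π̃, and the restriction of π̃ to Fix(π_d) is a fixed-point-free involution of Fix(π_d). -/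
/-!
On a fixed point `x` of `π d`, the path condition leaves exactly one other fixed point of `π d`
in the `⟨π c, π d⟩`-orbit of `x`, and off `Fix(π d)` the value is forced to be `π d x`. So the
required `π̃` is the graph of a relation that is functional, and symmetric because lying in a common
orbit is and `π d` is an involution; a symmetric functional relation is the graph of an involution.
-/

open MulAction

theorem Set.existsUnique_ne_of_ncard_eq_two {α : Type*} {s : Set α} (hs : s.ncard = 2) {x : α}
    (hx : x ∈ s) : ∃! y, y ∈ s ∧ y ≠ x := by
  obtain ⟨y, hy⟩ := Set.ncard_eq_one.mp (by rw [Set.ncard_sdiff_singleton_of_mem hx, hs] :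
    (s \ {x}).ncard = 1)
  have hy' : ∀ z, z ∈ s \ {x} ↔ z = y := Set.ext_iff.mp hy
  exact ⟨y, (hy' y).mpr rfl, fun z hz => (hy' z).mp hz⟩

theorem Function.exists_involutive_of_existsUnique_of_symm {α : Type*} {r : α → α → Prop}
    (hr : ∀ x, ∃! y, r x y) (hsymm : ∀ x y, r x y → r y x) :
    ∃ f : α → α, Function.Involutive f ∧ ∀ x, r x (f x) := by
  choose f hf using fun x => (hr x).exists
  exact ⟨f, fun x => (hr (f x)).unique (hf (f x)) (hsymm _ _ (hf x)), hf⟩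

section CappedRel

variable (G : Type*) {V : Type*} [Group G] [MulAction G V] (s : V → V)

def cappedRel (x y : V) : Prop :=
  (s x ≠ x → y = s x) ∧ (s x = x → s y = y ∧ y ≠ x ∧ y ∈ orbit G x)

variable {G s}

theorem cappedRel.ne {x y : V} (h : cappedRel G s x y) : y ≠ x := by
  by_cases hx : s x = x
  · exact (h.2 hx).2.1
  · rw [h.1 hx]; exact hx

theorem cappedRel.symm (hs : Function.Involutive s) {x y : V} (h : cappedRel G s x y) :
    cappedRel G s y x := by
  by_cases hx : s x = x
  · obtain ⟨hy, hyx, hxy⟩ := h.2 hx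
    exact ⟨fun hy' => absurd hy hy', fun _ => ⟨hx, hyx.symm, mem_orbit_symm.mp hxy⟩⟩
  · have hy : y = s x := h.1 hx
    have hsy : s y ≠ y := by rw [hy, hs x]; exact Ne.symm hx
    exact ⟨fun _ => by rw [hy, hs x], fun hy' => absurd hy' hsy⟩

theorem existsUnique_cappedRel
    (h2 : ∀ x, s x = x → (orbit G x ∩ {y | s y = y}).ncard = 2) (x : V) :
    ∃! y, cappedRel G s x y := by
  by_cases hx : s x = x
  · refine (existsUnique_congr fun y => ?_).mp
      (Set.existsUnique_ne_of_ncard_eq_two (h2 x hx) ⟨mem_orbit_self x, hx⟩)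
    simp only [cappedRel, hx, ne_eq, not_true_eq_false, false_imp_iff, true_imp_iff, true_and]
    exact ⟨fun ⟨⟨hyo, hy⟩, hyx⟩ => ⟨hy, hyx, hyo⟩, fun ⟨hy, hyx, hyo⟩ => ⟨⟨hyo, hy⟩, hyx⟩⟩
  · simp [cappedRel, hx]

end CappedRel

theorem exists_unique_capped_involution_general
    {V : Type*} [Fintype V] (d : ℕ)
    (π : Fin (d + 1) → Equiv.Perm V)
    (hinv : ∀ j, π j * π j = 1)
    (c : Fin (d + 1))
    (hpath : ∀ x : V,
      (MulAction.orbit (Subgroup.closure {π c, π (Fin.last d)}) x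
          ∩ {y : V | π (Fin.last d) y = y}).ncard = 0 ∨
      (MulAction.orbit (Subgroup.closure {π c, π (Fin.last d)}) x
          ∩ {y : V | π (Fin.last d) y = y}).ncard = 2) :
    ∃! t : Equiv.Perm V,
      (t * t = 1 ∧ ∀ x, t x ≠ x) ∧
      (∀ x : V, π (Fin.last d) x ≠ x → t x = π (Fin.last d) x) ∧
      (∀ x : V, π (Fin.last d) x = x →
        π (Fin.last d) (t x) = t x ∧ t x ≠ x ∧
        t x ∈ MulAction.orbit (Subgroup.closure {π c, π (Fin.last d)}) x) := by
  have hs : Function.Involutive (π (Fin.last d)) := fun x => by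
    simpa using congrArg (· x) (hinv (Fin.last d))
  have h2 : ∀ x, π (Fin.last d) x = x →
      (orbit (Subgroup.closure {π c, π (Fin.last d)}) x ∩ {y | π (Fin.last d) y = y}).ncard = 2 :=
    fun x hx => (hpath x).resolve_left (Set.ncard_ne_zero_of_mem ⟨mem_orbit_self x, hx⟩)
  obtain ⟨t, ht_inv, ht⟩ := Function.exists_involutive_of_existsUnique_of_symm
    (existsUnique_cappedRel h2) (fun _ _ h => h.symm hs)
  refine ⟨ht_inv.toPerm, ⟨⟨Equiv.ext ht_inv, fun x => (ht x).ne⟩, fun x => (ht x).1,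
    fun x => (ht x).2⟩, ?_⟩
  rintro t' ⟨-, ht'_off, ht'_on⟩
  exact Equiv.ext fun x => (existsUnique_cappedRel h2 x).unique ⟨ht'_off x, ht'_on x⟩ (ht x)

/-- Let `(π 0, …, π d)` encode a `(d+1)`-colored graph with boundary on a finite
vertex set `V` (`d ≥ 2`): `π j` is a fixed-point-free involution for `j < d`, and
`π d` is an involution whose fixed points are the boundary vertices.  Let
`c ∈ {0,…,d−1}` satisfy the path condition: every orbit of `⟨π c, π d⟩` contains
exactly `0` or `2` fixed points of `π d`.  Then there is a unique fixed-point-free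
involution `π̃` of `V` agreeing with `π d` outside `Fix(π d)` and mapping each
`x ∈ Fix(π d)` to a fixed point of `π d` distinct from `x` in the `⟨π c, π d⟩`-orbit
of `x`; moreover `Fix(π d)` is `π̃`-invariant and the restriction of `π̃` to
`Fix(π d)` is a fixed-point-free involution of `Fix(π d)`. -/
theorem exists_unique_capped_involution
    {V : Type*} [Fintype V] (d : ℕ) (hd : 2 ≤ d)
    (π : Fin (d + 1) → Equiv.Perm V)
    (hinv : ∀ j, π j * π j = 1)
    (hfpf : ∀ j : Fin (d + 1), j ≠ Fin.last d → ∀ x, π j x ≠ x)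
    (c : Fin (d + 1)) (hc : c ≠ Fin.last d)
    (hpath : ∀ x : V,
      (MulAction.orbit (Subgroup.closure {π c, π (Fin.last d)}) x
          ∩ {y : V | π (Fin.last d) y = y}).ncard = 0 ∨
      (MulAction.orbit (Subgroup.closure {π c, π (Fin.last d)}) x
          ∩ {y : V | π (Fin.last d) y = y}).ncard = 2) :
    ∃! t : Equiv.Perm V,
      (t * t = 1 ∧ ∀ x, t x ≠ x) ∧
      (∀ x : V, π (Fin.last d) x ≠ x → t x = π (Fin.last d) x) ∧
      (∀ x : V, π (Fin.last d) x = x →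
        π (Fin.last d) (t x) = t x ∧ t x ≠ x ∧
        t x ∈ MulAction.orbit (Subgroup.closure {π c, π (Fin.last d)}) x) :=
  exists_unique_capped_involution_general d π hinv c hpath
end

section
/- Let c ∈ {0,…,d−1} satisfy the path condition. Then the orbits on V of the subgroup generated by π_c and the c-capped involution π̃^{(c)} coincide with the orbits of the subgroup generated by π_c and π_d; consequently g̃_{cd} = g_{cd} = ġ_{cd} + p̄, where g̃_{cd} is the number of orbits of ⟨π_c, π̃^{(c)}⟩, g_{cd} is the number of orbits of ⟨π_c, π_d⟩, ġ_{cd} is the number of orbits of ⟨π_c, π_d⟩ disjoint from Fix(π_d), and 2p̄ = |Fix(π_d)|. -/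
/-- The number of orbits on `V` of the subgroup generated by `S` that are disjoint
from a given set `F`. -/
noncomputable def numOrbitsAway {V : Type*} [Fintype V] (S : Set (Equiv.Perm V))
    (F : Set V) : ℕ :=
  Nat.card {ω : MulAction.orbitRel.Quotient (Subgroup.closure S) V // ω.orbit ∩ F = ∅}

/-!
Capping only changes `π d` on its fixed points, where `π d` acts trivially, and sends each of
them into its own `⟨π c, π d⟩`-orbit. Hence each generator of either group `⟨π c, π d⟩`,
`⟨π c, π̃⟩` moves every point inside its orbit under the other group, and the two groups have the
same orbits. For the count, every orbit meets `Fix(π d)` in `0` or `2` points, so exactly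
`p̄ = |Fix(π d)| / 2` orbits meet it.
-/

open MulAction

namespace MulAction

variable {G V : Type*} [Group G] [MulAction G V]

lemma smul_mem_orbit_closure {S : Set G} {s : G} (hs : s ∈ S) (x : V) :
    s • x ∈ orbit (Subgroup.closure S) x :=
  mem_orbit x (⟨s, Subgroup.subset_closure hs⟩ : Subgroup.closure S)

lemma orbit_closure_subset {S T : Set G}
    (h : ∀ s ∈ S, ∀ x : V, s • x ∈ orbit (Subgroup.closure T) x) (x : V) :
    orbit (Subgroup.closure S) x ⊆ orbit (Subgroup.closure T) x := by
  rintro _ ⟨⟨g, hg⟩, rfl⟩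
  change g • x ∈ _
  induction hg using Subgroup.closure_induction generalizing x with
  | mem s hs => exact h s hs x
  | one => rw [one_smul]; exact mem_orbit_self x
  | mul a b _ _ iha ihb =>
    rw [mul_smul, ← orbit_eq_iff.mpr (ihb x)]
    exact iha (b • x)
  | inv a _ iha =>
    have := iha (a⁻¹ • x)
    rw [smul_inv_smul] at this
    exact mem_orbit_symm.mp this

lemma orbit_closure_eq_of_forall_smul_mem {S T : Set G}
    (hST : ∀ s ∈ S, ∀ x : V, s • x ∈ orbit (Subgroup.closure T) x)
    (hTS : ∀ t ∈ T, ∀ x : V, t • x ∈ orbit (Subgroup.closure S) x) (x : V) :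
    orbit (Subgroup.closure S) x = orbit (Subgroup.closure T) x :=
  (orbit_closure_subset hST x).antisymm (orbit_closure_subset hTS x)

lemma card_orbitRel_quotient_eq_of_orbit_eq {H K : Subgroup G}
    (h : ∀ x : V, orbit H x = orbit K x) :
    Nat.card (orbitRel.Quotient H V) = Nat.card (orbitRel.Quotient K V) :=
  Nat.card_congr <| Quotient.congrRight fun a b => by
    rw [orbitRel_apply, orbitRel_apply, h]

lemma card_eq_sum_ncard_orbit_inter [Fintype V] [Fintype (orbitRel.Quotient G V)]
    (F : Set V) :
    Nat.card F = ∑ ω : orbitRel.Quotient G V, (ω.orbit ∩ F).ncard := by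
  classical
  rw [Nat.card_eq_card_toFinset, Finset.card_eq_sum_card_fiberwise
    (f := (Quotient.mk'' : V → orbitRel.Quotient G V)) (t := Finset.univ)
    fun _ _ => Finset.mem_univ _]
  refine Finset.sum_congr rfl fun ω _ => ?_
  rw [Set.ncard_eq_toFinset_card']
  congr 1
  ext y
  simp [orbitRel.Quotient.mem_orbit, and_comm]

lemma card_eq_mul_card_orbits_meeting [Fintype V] (F : Set V) (k : ℕ)
    (h : ∀ x, (orbit G x ∩ F).ncard = 0 ∨ (orbit G x ∩ F).ncard = k) :
    Nat.card F = k * Nat.card {ω : orbitRel.Quotient G V // ω.orbit ∩ F ≠ ∅} := by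
  classical
  have hω (ω : orbitRel.Quotient G V) :
      (ω.orbit ∩ F).ncard = if ω.orbit ∩ F = ∅ then 0 else k := by
    induction ω using Quotient.inductionOn' with
    | h x =>
      rw [orbitRel.Quotient.orbit_mk]
      split_ifs with hx
      · simp [hx]
      · exact (h x).resolve_left fun h0 => hx ((Set.ncard_eq_zero).mp h0)
  rw [card_eq_sum_ncard_orbit_inter (G := G), Finset.sum_congr rfl fun ω _ => hω ω,
    Finset.sum_ite, Finset.sum_const_zero, zero_add, Finset.sum_const, smul_eq_mul, mul_comm,
    Nat.card_eq_fintype_card, Fintype.card_subtype]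

lemma card_orbitRel_quotient_eq_card_disjoint_add [Fintype V] (F : Set V) {k p : ℕ}
    (hk : k ≠ 0) (h : ∀ x, (orbit G x ∩ F).ncard = 0 ∨ (orbit G x ∩ F).ncard = k)
    (hF : Nat.card F = k * p) :
    Nat.card (orbitRel.Quotient G V)
      = Nat.card {ω : orbitRel.Quotient G V // ω.orbit ∩ F = ∅} + p := by
  have hmeet : Nat.card {ω : orbitRel.Quotient G V // ω.orbit ∩ F ≠ ∅} = p :=
    Nat.eq_of_mul_eq_mul_left (Nat.pos_of_ne_zero hk)
      ((card_eq_mul_card_orbits_meeting F k h).symm.trans hF)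
  rw [← hmeet, ← Nat.card_sum]
  exact Nat.card_congr (Equiv.sumCompl _).symm

end MulAction

theorem capped_orbits_eq_and_count_general
    {V : Type*} [Fintype V] (d : ℕ)
    (π : Fin (d + 1) → Equiv.Perm V)
    (pbar : ℕ) (hpbar : Nat.card {y : V | π (Fin.last d) y = y} = 2 * pbar)
    (c : Fin (d + 1))
    (hpath : ∀ x : V,
      (MulAction.orbit (Subgroup.closure {π c, π (Fin.last d)}) x
          ∩ {y : V | π (Fin.last d) y = y}).ncard = 0 ∨
      (MulAction.orbit (Subgroup.closure {π c, π (Fin.last d)}) x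
          ∩ {y : V | π (Fin.last d) y = y}).ncard = 2)
    (t : Equiv.Perm V)
    (ht_out : ∀ x : V, π (Fin.last d) x ≠ x → t x = π (Fin.last d) x)
    (ht_fix : ∀ x : V, π (Fin.last d) x = x →
      π (Fin.last d) (t x) = t x ∧ t x ≠ x ∧
      t x ∈ MulAction.orbit (Subgroup.closure {π c, π (Fin.last d)}) x) :
    (∀ x : V, MulAction.orbit (Subgroup.closure {π c, t}) x
        = MulAction.orbit (Subgroup.closure {π c, π (Fin.last d)}) x) ∧
    numOrbits {π c, t} = numOrbits {π c, π (Fin.last d)} ∧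
    numOrbits {π c, π (Fin.last d)}
      = numOrbitsAway {π c, π (Fin.last d)} {y : V | π (Fin.last d) y = y} + pbar := by
  set L := π (Fin.last d)
  have horb : ∀ x : V, orbit (Subgroup.closure {π c, t}) x
      = orbit (Subgroup.closure {π c, L}) x := by
    refine orbit_closure_eq_of_forall_smul_mem ?_ ?_
    · rintro s (rfl | rfl) x
      · exact smul_mem_orbit_closure (Set.mem_insert _ _) x
      · by_cases hx : L x = x
        · exact (ht_fix x hx).2.2
        · rw [Equiv.Perm.smul_def, ht_out x hx]
          exact smul_mem_orbit_closure (Set.mem_insert_of_mem _ (Set.mem_singleton _)) x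
    · rintro s (rfl | rfl) x
      · exact smul_mem_orbit_closure (Set.mem_insert _ _) x
      · by_cases hx : L x = x
        · rw [Equiv.Perm.smul_def, hx]
          exact mem_orbit_self x
        · rw [Equiv.Perm.smul_def, ← ht_out x hx]
          exact smul_mem_orbit_closure (Set.mem_insert_of_mem _ (Set.mem_singleton _)) x
  exact ⟨horb, card_orbitRel_quotient_eq_of_orbit_eq horb,
    card_orbitRel_quotient_eq_card_disjoint_add _ two_ne_zero hpath hpbar⟩

/-- Let `(π 0, …, π d)` encode a `(d+1)`-colored graph with boundary on a finite
vertex set `V` (`d ≥ 2`), with `2p̄ = |Fix(π d)|`, and let `c ∈ {0,…,d−1}` satisfy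
the path condition.  Let `t = π̃^{(c)}` be the `c`-capped involution.  Then the
orbits of `⟨π c, t⟩` coincide with the orbits of `⟨π c, π d⟩`; consequently
`g̃_{cd} = g_{cd} = ġ_{cd} + p̄`, where `ġ_{cd}` counts the orbits of `⟨π c, π d⟩`
disjoint from `Fix(π d)`. -/
theorem capped_orbits_eq_and_count
    {V : Type*} [Fintype V] (d : ℕ) (hd : 2 ≤ d)
    (π : Fin (d + 1) → Equiv.Perm V)
    (hinv : ∀ j, π j * π j = 1)
    (hfpf : ∀ j : Fin (d + 1), j ≠ Fin.last d → ∀ x, π j x ≠ x)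
    (pbar : ℕ) (hpbar : Nat.card {y : V | π (Fin.last d) y = y} = 2 * pbar)
    (c : Fin (d + 1)) (hc : c ≠ Fin.last d)
    (hpath : ∀ x : V,
      (MulAction.orbit (Subgroup.closure {π c, π (Fin.last d)}) x
          ∩ {y : V | π (Fin.last d) y = y}).ncard = 0 ∨
      (MulAction.orbit (Subgroup.closure {π c, π (Fin.last d)}) x
          ∩ {y : V | π (Fin.last d) y = y}).ncard = 2)
    (t : Equiv.Perm V)
    (ht_inv : t * t = 1) (ht_fpf : ∀ x, t x ≠ x)
    (ht_out : ∀ x : V, π (Fin.last d) x ≠ x → t x = π (Fin.last d) x)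
    (ht_fix : ∀ x : V, π (Fin.last d) x = x →
      π (Fin.last d) (t x) = t x ∧ t x ≠ x ∧
      t x ∈ MulAction.orbit (Subgroup.closure {π c, π (Fin.last d)}) x) :
    (∀ x : V, MulAction.orbit (Subgroup.closure {π c, t}) x
        = MulAction.orbit (Subgroup.closure {π c, π (Fin.last d)}) x) ∧
    numOrbits {π c, t} = numOrbits {π c, π (Fin.last d)} ∧
    numOrbits {π c, π (Fin.last d)}
      = numOrbitsAway {π c, π (Fin.last d)} {y : V | π (Fin.last d) y = y} + pbar :=
  capped_orbits_eq_and_count_general d π pbar hpbar c hpath t ht_out ht_fix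
end

section
/- Let i, c ∈ {0,…,d−1} be distinct colors, each satisfying the path condition. Then the number of orbits on V of the subgroup generated by π_i and the c-capped involution π̃^{(c)} equals ġ_{id} + ∂g_{ic}, where ġ_{id} is the number of orbits of ⟨π_i, π_d⟩ disjoint from Fix(π_d) and ∂g_{ic} is the number of orbits on Fix(π_d) of the subgroup generated by the boundary involutions ∂π_i and ∂π_c. -/
open MulAction Equiv Subgroup

theorem Set.eq_pair_of_ncard_le_two {α : Type*} [Finite α] {S : Set α} (hS : S.ncard ≤ 2)
    {b c : α} (hb : b ∈ S) (hc : c ∈ S) (hbc : b ≠ c) : S = {b, c} :=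
  (Set.eq_of_subset_of_ncard_le (Set.pair_subset hb hc) (by rwa [Set.ncard_pair hbc])
    S.toFinite).symm

section Orbits

variable {V : Type*}

theorem card_orbits_disjoint_eq_of_orbit_subset {G H : Type*} [Group G] [Group H]
    [MulAction G V] [MulAction H V] {F : Set V} (hle : ∀ x : V, orbit H x ⊆ orbit G x)
    (heq : ∀ x : V, orbit H x ∩ F = ∅ → orbit G x = orbit H x) :
    Nat.card {ω : orbitRel.Quotient G V // ω.orbit ∩ F = ∅}
      = Nat.card {ω : orbitRel.Quotient H V // ω.orbit ∩ F = ∅} := by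
  let s : Setoid {x // orbit H x ∩ F = ∅} := (orbitRel H V).comap Subtype.val
  have eG := subtypeQuotientEquivQuotientSubtype (s₂ := s) (fun x => orbit H x ∩ F = ∅)
    (fun ω : orbitRel.Quotient G V => ω.orbit ∩ F = ∅)
    (fun x => show _ ↔ orbit G x ∩ F = ∅ from
      ⟨fun hx => heq x hx ▸ hx,
        fun hx => Set.subset_empty_iff.1 (hx ▸ Set.inter_subset_inter_left F (hle x))⟩)
    (fun x y => show (x : V) ∈ orbit H (y : V) ↔ (x : V) ∈ orbit G (y : V) by
      rw [heq y y.2])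
  have eH := subtypeQuotientEquivQuotientSubtype (s₂ := s) (fun x => orbit H x ∩ F = ∅)
    (fun ω : orbitRel.Quotient H V => ω.orbit ∩ F = ∅) (fun _ => Iff.rfl) (fun _ _ => Iff.rfl)
  exact Nat.card_congr (eG.trans eH.symm)

theorem card_quotient_comap_subtype_val (G : Type*) [Group G] [MulAction G V] (P : V → Prop) :
    Nat.card (Quotient ((orbitRel G V).comap (Subtype.val : Subtype P → V)))
      = Nat.card {ω : orbitRel.Quotient G V // ¬ ω.orbit ∩ {y | P y} = ∅} := by
  refine Nat.card_congr ((Setoid.comapQuotientEquiv _ _).trans (subtypeEquivRight fun ω => ?_))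
  simp only [Set.mem_range, Function.comp_apply, ← Set.nonempty_iff_ne_empty, Set.Nonempty,
    Set.mem_inter_iff, orbitRel.Quotient.mem_orbit, Set.mem_ofPred_eq, Subtype.exists]
  exact ⟨fun ⟨y, hy, h⟩ => ⟨y, h, hy⟩, fun ⟨y, h, hy⟩ => ⟨y, hy, h⟩⟩

theorem apply_mem_orbit_closure {S : Set (Perm V)} {g : Perm V} (hg : g ∈ S)
    {x z : V} (hz : z ∈ orbit (closure S) x) : g z ∈ orbit (closure S) x :=
  mapsTo_smul_orbit (⟨g, subset_closure hg⟩ : closure S) x hz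

/-- In a finite group the generated subgroup is the generated submonoid, so invariance under the
generators alone (not their inverses) suffices. -/
theorem orbit_closure_subset_of_mapsTo [Finite V] {S : Set (Perm V)} {T : Set V}
    (hS : ∀ g ∈ S, Set.MapsTo g T T) {x : V} (hx : x ∈ T) : orbit (closure S) x ⊆ T := by
  rintro _ ⟨⟨g, hg⟩, rfl⟩
  suffices Set.MapsTo g T T from this hx
  rw [← mem_toSubmonoid, closure_toSubmonoid_of_finite] at hg
  induction hg using Submonoid.closure_induction with
  | mem g hg => exact hS g hg
  | one => exact Set.mapsTo_id T
  | mul g h _ _ hg hh => exact hg.comp hh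

end Orbits

section Capping

/- `p`, `t`, `s` stand for `π_d`, `π̃^{(c)}`, `π̃^{(i)}`, and `ba`, `bt` for `∂π_i`, `∂π_c`;
`hpair` is the path condition for `i` in the form it is used. -/
variable {V : Type*} [Finite V] {a p t s : Perm V} {ba bt : Perm {y // p y = y}}

theorem orbit_subset_orbit_of_eq_off_fixedPoints (ht : ∀ x, p x ≠ x → t x = p x) (x : V) :
    orbit (closure {a, p}) x ⊆ orbit (closure {a, t}) x := by
  refine orbit_closure_subset_of_mapsTo ?_ (mem_orbit_self x)
  rintro g (rfl | rfl) z hz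
  · exact apply_mem_orbit_closure (Set.mem_insert _ _) hz
  · by_cases hz_fixed : g z = z
    · rw [hz_fixed]; exact hz
    · rw [← ht z hz_fixed]
      exact apply_mem_orbit_closure (Set.mem_insert_of_mem _ (Set.mem_singleton _)) hz

theorem orbit_eq_orbit_of_inter_fixedPoints_eq_empty (ht : ∀ x, p x ≠ x → t x = p x) {x : V}
    (hx : orbit (closure {a, p}) x ∩ {y | p y = y} = ∅) :
    orbit (closure {a, t}) x = orbit (closure {a, p}) x := by
  refine subset_antisymm (orbit_closure_subset_of_mapsTo ?_ (mem_orbit_self x))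
    (orbit_subset_orbit_of_eq_off_fixedPoints ht x)
  rintro g (rfl | rfl) z hz
  · exact apply_mem_orbit_closure (Set.mem_insert _ _) hz
  · have hz_moved : p z ≠ z := fun h => Set.eq_empty_iff_forall_notMem.1 hx z ⟨hz, h⟩
    rw [ht z hz_moved]
    exact apply_mem_orbit_closure (Set.mem_insert_of_mem _ (Set.mem_singleton _)) hz

theorem mem_orbit_of_mem_boundary_orbit (ht : ∀ x, p x ≠ x → t x = p x)
    (hpair : ∀ b, p b = b → orbit (closure {a, p}) b ∩ {y | p y = y} = {b, s b})
    (hba : ∀ y, (ba y : V) = s y) (hbt : ∀ y, (bt y : V) = t y) {β γ : {y // p y = y}}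
    (hγ : γ ∈ orbit (closure {ba, bt}) β) : (γ : V) ∈ orbit (closure {a, t}) (β : V) := by
  refine orbit_closure_subset_of_mapsTo (T := Subtype.val ⁻¹' orbit (closure {a, t}) (β : V))
    ?_ (mem_orbit_self _) hγ
  rintro g (rfl | rfl) z hz <;> rw [Set.mem_preimage] at hz ⊢
  · have hsz : s z ∈ orbit (closure {a, p}) (z : V) ∩ {y | p y = y} := by
      rw [hpair z z.2]
      exact Set.mem_insert_of_mem _ (Set.mem_singleton _)
    rw [hba, ← orbit_eq_iff.2 hz]
    exact orbit_subset_orbit_of_eq_off_fixedPoints ht _ hsz.1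
  · rw [hbt]
    exact apply_mem_orbit_closure (Set.mem_insert_of_mem _ (Set.mem_singleton _)) hz

theorem orbit_inter_fixedPoints_subset_boundary_orbit (ht : ∀ x, p x ≠ x → t x = p x)
    (hpair : ∀ b, p b = b → orbit (closure {a, p}) b ∩ {y | p y = y} = {b, s b})
    (hba : ∀ y, (ba y : V) = s y) (hbt : ∀ y, (bt y : V) = t y) (β : {y // p y = y}) :
    orbit (closure {a, t}) (β : V) ∩ {y | p y = y}
      ⊆ Subtype.val '' orbit (closure {ba, bt}) β := by
  set O := orbit (closure {ba, bt}) β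
  -- `T` is invariant under `a` and `t`, hence contains the whole `⟨a, t⟩`-orbit of `β`.
  let T : Set V := ⋃ γ ∈ O, orbit (closure {a, p}) (γ : V)
  have hT_fixed : T ∩ {y | p y = y} ⊆ Subtype.val '' O := by
    rintro z ⟨hz, hz_fixed⟩
    obtain ⟨γ, hγ, hzγ⟩ := Set.mem_iUnion₂.1 hz
    have hz_pair : z ∈ ({(γ : V), s γ} : Set V) := hpair γ γ.2 ▸ ⟨hzγ, hz_fixed⟩
    rcases hz_pair with rfl | rfl
    · exact ⟨γ, hγ, rfl⟩
    · exact ⟨ba γ, apply_mem_orbit_closure (Set.mem_insert _ _) hγ, hba γ⟩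
  have hT : orbit (closure {a, t}) (β : V) ⊆ T := by
    refine orbit_closure_subset_of_mapsTo ?_
      (Set.mem_iUnion₂.2 ⟨β, mem_orbit_self β, mem_orbit_self _⟩)
    rintro g (rfl | rfl) z hz
    · obtain ⟨γ, hγ, hzγ⟩ := Set.mem_iUnion₂.1 hz
      exact Set.mem_iUnion₂.2 ⟨γ, hγ, apply_mem_orbit_closure (Set.mem_insert _ _) hzγ⟩
    · by_cases hz_fixed : p z = z
      · obtain ⟨γ, hγ, rfl⟩ := hT_fixed ⟨hz, hz_fixed⟩
        refine Set.mem_iUnion₂.2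
          ⟨bt γ, apply_mem_orbit_closure (Set.mem_insert_of_mem _ (Set.mem_singleton _)) hγ, ?_⟩
        rw [← hbt]
        exact mem_orbit_self _
      · obtain ⟨γ, hγ, hzγ⟩ := Set.mem_iUnion₂.1 hz
        rw [ht z hz_fixed]
        exact Set.mem_iUnion₂.2
          ⟨γ, hγ, apply_mem_orbit_closure (Set.mem_insert_of_mem _ (Set.mem_singleton _)) hzγ⟩
  exact (Set.inter_subset_inter_left _ hT).trans hT_fixed

theorem mem_boundary_orbit_iff (ht : ∀ x, p x ≠ x → t x = p x)
    (hpair : ∀ b, p b = b → orbit (closure {a, p}) b ∩ {y | p y = y} = {b, s b})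
    (hba : ∀ y, (ba y : V) = s y) (hbt : ∀ y, (bt y : V) = t y) (γ β : {y // p y = y}) :
    γ ∈ orbit (closure {ba, bt}) β ↔ (γ : V) ∈ orbit (closure {a, t}) (β : V) := by
  refine ⟨mem_orbit_of_mem_boundary_orbit ht hpair hba hbt, fun hγ => ?_⟩
  obtain ⟨δ, hδ, hδγ⟩ := orbit_inter_fixedPoints_subset_boundary_orbit ht hpair hba hbt β ⟨hγ, γ.2⟩
  rwa [← Subtype.ext hδγ]

theorem card_boundary_orbits_eq (ht : ∀ x, p x ≠ x → t x = p x)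
    (hpair : ∀ b, p b = b → orbit (closure {a, p}) b ∩ {y | p y = y} = {b, s b})
    (hba : ∀ y, (ba y : V) = s y) (hbt : ∀ y, (bt y : V) = t y) :
    Nat.card (orbitRel.Quotient (closure {ba, bt}) {y // p y = y})
      = Nat.card {ω : orbitRel.Quotient (closure {a, t}) V // ¬ ω.orbit ∩ {y | p y = y} = ∅} :=
  (Nat.card_congr (Quotient.congrRight (mem_boundary_orbit_iff ht hpair hba hbt))).trans
    (card_quotient_comap_subtype_val _ _)

end Capping

theorem capped_orbit_count_eq_interior_add_boundary_general
    {V : Type*} [Fintype V] [DecidableEq V] (d : ℕ)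
    (π : Fin (d + 1) → Equiv.Perm V)
    (i : Fin (d + 1))
    (hpath_i : ∀ x : V,
      (MulAction.orbit (Subgroup.closure {π i, π (Fin.last d)}) x
          ∩ {y : V | π (Fin.last d) y = y}).ncard = 0 ∨
      (MulAction.orbit (Subgroup.closure {π i, π (Fin.last d)}) x
          ∩ {y : V | π (Fin.last d) y = y}).ncard = 2)
    (ti tc : Equiv.Perm V)
    (hti_fix : ∀ x : V, π (Fin.last d) x = x →
      π (Fin.last d) (ti x) = ti x ∧ ti x ≠ x ∧
      ti x ∈ MulAction.orbit (Subgroup.closure {π i, π (Fin.last d)}) x)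
    (htc_out : ∀ x : V, π (Fin.last d) x ≠ x → tc x = π (Fin.last d) x)
    (bi bc : Equiv.Perm {y : V // π (Fin.last d) y = y})
    (hbi : ∀ y : {y : V // π (Fin.last d) y = y}, (bi y : V) = ti y)
    (hbc : ∀ y : {y : V // π (Fin.last d) y = y}, (bc y : V) = tc y) :
    numOrbits {π i, tc}
      = numOrbitsAway {π i, π (Fin.last d)} {y : V | π (Fin.last d) y = y}
        + numOrbits {bi, bc} := by
  have hpair : ∀ b, π (Fin.last d) b = b →
      orbit (closure {π i, π (Fin.last d)}) b ∩ {y | π (Fin.last d) y = y} = {b, ti b} := by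
    intro b hb
    obtain ⟨hs_fixed, hs_ne, hs_mem⟩ := hti_fix b hb
    exact Set.eq_pair_of_ncard_le_two (by rcases hpath_i b with h | h <;> omega)
      ⟨mem_orbit_self b, hb⟩ ⟨hs_mem, hs_fixed⟩ hs_ne.symm
  rw [numOrbits, numOrbits, numOrbitsAway, ← Nat.card_congr (Equiv.sumCompl
      fun ω : orbitRel.Quotient (closure {π i, tc}) V =>
        ω.orbit ∩ {y | π (Fin.last d) y = y} = ∅), Nat.card_sum,
    card_orbits_disjoint_eq_of_orbit_subset (orbit_subset_orbit_of_eq_off_fixedPoints htc_out)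
      (fun _ => orbit_eq_orbit_of_inter_fixedPoints_eq_empty htc_out),
    card_boundary_orbits_eq htc_out hpair hbi hbc]

/-- Let `(π 0, …, π d)` encode a `(d+1)`-colored graph with boundary on a finite
vertex set `V` (`d ≥ 2`).  Let `i, c ∈ {0,…,d−1}` be distinct colors satisfying the
path condition, with capped involutions `t_i = π̃^{(i)}`, `t_c = π̃^{(c)}` and
boundary involutions `∂π_i`, `∂π_c` (the restrictions of `t_i`, `t_c` to
`Fix(π d)`).  Then the number of orbits of `⟨π i, t_c⟩` equals
`ġ_{id} + ∂g_{ic}`, where `ġ_{id}` counts the orbits of `⟨π i, π d⟩` disjoint from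
`Fix(π d)` and `∂g_{ic}` counts the orbits on `Fix(π d)` of `⟨∂π_i, ∂π_c⟩`. -/
theorem capped_orbit_count_eq_interior_add_boundary
    {V : Type*} [Fintype V] [DecidableEq V] (d : ℕ) (hd : 2 ≤ d)
    (π : Fin (d + 1) → Equiv.Perm V)
    (hinv : ∀ j, π j * π j = 1)
    (hfpf : ∀ j : Fin (d + 1), j ≠ Fin.last d → ∀ x, π j x ≠ x)
    (i c : Fin (d + 1)) (hi : i ≠ Fin.last d) (hc : c ≠ Fin.last d) (hic : i ≠ c)
    (hpath_i : ∀ x : V,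
      (MulAction.orbit (Subgroup.closure {π i, π (Fin.last d)}) x
          ∩ {y : V | π (Fin.last d) y = y}).ncard = 0 ∨
      (MulAction.orbit (Subgroup.closure {π i, π (Fin.last d)}) x
          ∩ {y : V | π (Fin.last d) y = y}).ncard = 2)
    (hpath_c : ∀ x : V,
      (MulAction.orbit (Subgroup.closure {π c, π (Fin.last d)}) x
          ∩ {y : V | π (Fin.last d) y = y}).ncard = 0 ∨
      (MulAction.orbit (Subgroup.closure {π c, π (Fin.last d)}) x
          ∩ {y : V | π (Fin.last d) y = y}).ncard = 2)
    (ti tc : Equiv.Perm V)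
    (hti_inv : ti * ti = 1) (hti_fpf : ∀ x, ti x ≠ x)
    (hti_out : ∀ x : V, π (Fin.last d) x ≠ x → ti x = π (Fin.last d) x)
    (hti_fix : ∀ x : V, π (Fin.last d) x = x →
      π (Fin.last d) (ti x) = ti x ∧ ti x ≠ x ∧
      ti x ∈ MulAction.orbit (Subgroup.closure {π i, π (Fin.last d)}) x)
    (htc_inv : tc * tc = 1) (htc_fpf : ∀ x, tc x ≠ x)
    (htc_out : ∀ x : V, π (Fin.last d) x ≠ x → tc x = π (Fin.last d) x)
    (htc_fix : ∀ x : V, π (Fin.last d) x = x →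
      π (Fin.last d) (tc x) = tc x ∧ tc x ≠ x ∧
      tc x ∈ MulAction.orbit (Subgroup.closure {π c, π (Fin.last d)}) x)
    (bi bc : Equiv.Perm {y : V // π (Fin.last d) y = y})
    (hbi : ∀ y : {y : V // π (Fin.last d) y = y}, (bi y : V) = ti y)
    (hbc : ∀ y : {y : V // π (Fin.last d) y = y}, (bc y : V) = tc y) :
    numOrbits {π i, tc}
      = numOrbitsAway {π i, π (Fin.last d)} {y : V | π (Fin.last d) y = y}
        + numOrbits {bi, bc} :=
  capped_orbit_count_eq_interior_add_boundary_general d π i hpath_i ti tc hti_fix htc_out bi bc hbi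
    hbc
end

section
/- Let (π_0,…,π_4) encode a regular 5-colored graph on V, and let x, y ∈ V with π_j(x) = y form a 1-dipole of color j, i.e. x and y lie in distinct orbits of the subgroup generated by {π_i : i ≠ j}. Let (π'_0,…,π'_4) on V' = V \ {x,y} be obtained by cancelling the dipole: for i ≠ j, π'_i(z) = π_i(y) if π_i(z) = x, π'_i(z) = π_i(x) if π_i(z) = y, and π'_i(z) = π_i(z) otherwise, while π'_j is the restriction of π_j to V'. Then each π'_i is a fixed-point-free involution of V', and the orbit counts satisfy: g'_{ab} = g_{ab} − 1 for every pair of distinct colors a, b with j ∉ {a,b}, and g'_{ja} = g_{ja} for every color a ≠ j. -/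
/-!
Cancelling the dipole reroutes every edge `z — x` of colour `i ≠ j` to `z — π i y` and every
edge `z — y` to `z — π i x`. So for colours `σ = π a`, `τ = π b`, the `⟨σ', τ'⟩`-orbits on
`V'` should be the `⟨σ, τ⟩`-orbits on `V` with `x, y` deleted and the orbits of `x` and `y`
glued together.

Two maps make this precise. Sending `z ∈ V'` to its `⟨σ, τ⟩`-orbit, with the orbits of `x` and `y`
identified, is invariant under the cancelled involutions. In the other direction, sending
`z ∉ {x, y}` to its `⟨σ', τ'⟩`-orbit and both `x, y` to the orbit of `σ x` is invariant as soon
as `τ x` and `τ y` lie in the orbits of `σ x` and `σ y`. This is trivial if `τ = π j`, as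
`τ x = y`. If `j ∉ {a, b}`, then the `⟨σ, τ⟩`-orbit of `x` is an even cycle alternating between
`σ`- and `τ`-edges. Walking around it from `σ x` to `τ x` never meets `x`, because the
reflections `σ (τ σ)ᵏ` fix no point when `σ` and `τ` are fixed-point-free. The walk never meets
`y` either, since `y` lies in another orbit. The composite of the two maps is the gluing map, so
the number of orbits stays the same when `x` and `y` already share an orbit and drops by one
otherwise.
-/

open Equiv Function

section OrbitSpace

variable {V : Type*} (S : Set (Perm V))

abbrev OrbitSpace : Type _ :=
  MulAction.orbitRel.Quotient (Subgroup.closure S) V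

namespace OrbitSpace

def mk (z : V) : OrbitSpace S :=
  Quotient.mk'' z

variable {S}

theorem mk_surjective : Surjective (mk S) :=
  Quotient.mk''_surjective

theorem mk_eq_mk_iff {z w : V} : mk S z = mk S w ↔ z ∈ MulAction.orbit (Subgroup.closure S) w :=
  Quotient.eq''.trans MulAction.orbitRel_apply

theorem mk_ne_mk_of_notMem_orbit {T : Set (Perm V)} (hST : S ⊆ T) {z w : V}
    (h : w ∉ MulAction.orbit (Subgroup.closure T) z) : mk S z ≠ mk S w := fun hzw => by
  obtain ⟨⟨g, hg⟩, hgz⟩ := mk_eq_mk_iff.1 hzw.symm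
  exact h ⟨⟨g, Subgroup.closure_mono hST hg⟩, hgz⟩

theorem mk_apply_of_mem_closure {g : Perm V} (hg : g ∈ Subgroup.closure S) (z : V) :
    mk S (g z) = mk S z :=
  Quotient.sound' ⟨⟨g, hg⟩, rfl⟩

theorem mk_apply_of_mem {s : Perm V} (hs : s ∈ S) (z : V) : mk S (s z) = mk S z :=
  mk_apply_of_mem_closure (Subgroup.subset_closure hs) z

theorem apply_eq_of_mem_closure {β : Sort*} {f : V → β} (hf : ∀ s ∈ S, ∀ z, f (s z) = f z)
    {g : Perm V} (hg : g ∈ Subgroup.closure S) (z : V) : f (g z) = f z := by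
  induction hg using Subgroup.closure_induction generalizing z with
  | mem s hs => exact hf s hs z
  | one => rfl
  | mul g h _ _ ihg ihh => rw [Perm.mul_apply, ihg, ihh]
  | inv g _ ihg => simpa using (ihg (g⁻¹ z)).symm

def lift {β : Sort*} (f : V → β) (hf : ∀ s ∈ S, ∀ z, f (s z) = f z) : OrbitSpace S → β :=
  Quotient.lift f fun _ _ ⟨g, hg⟩ => hg ▸ apply_eq_of_mem_closure hf g.2 _

@[simp]
theorem lift_mk {β : Sort*} (f : V → β) (hf : ∀ s ∈ S, ∀ z, f (s z) = f z) (z : V) :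
    lift f hf (mk S z) = f z :=
  rfl

end OrbitSpace

end OrbitSpace

theorem card_eq_card_sub_one_of_leftInvOn {Q Q' : Type*} [Finite Q] {Φ : Q → Q'} {M : Q' → Q}
    {a b : Q} (hab : a ≠ b) (hΦ : Surjective Φ) (hΦab : Φ a = Φ b)
    (hM : Set.LeftInvOn M Φ {b}ᶜ) : Nat.card Q' = Nat.card Q - 1 := by
  classical
  have hbij : Bijective fun c : {c // c ≠ b} => Φ c := by
    refine ⟨fun c d h => Subtype.ext ?_, fun q => ?_⟩
    · rw [← hM c.2, ← hM d.2]
      exact congrArg M h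
    · obtain ⟨c, rfl⟩ := hΦ q
      by_cases hc : c = b
      · exact ⟨⟨a, hab⟩, hc ▸ hΦab⟩
      · exact ⟨⟨c, hc⟩, rfl⟩
  rw [← Nat.card_eq_of_bijective _ hbij, ← Nat.card_congr (Equiv.optionSubtypeNe b),
    Finite.card_option, Nat.add_sub_cancel]

section Dipole

variable {V : Type*} [DecidableEq V]

def cancelDipole (x y : V) (σ : Perm V) (z : V) : V :=
  if σ z = x then σ y else if σ z = y then σ x else σ z

variable {x y : V} {σ : Perm V}

theorem cancelDipole_cancelDipole (hσ : Involutive σ) {z : V} (hz : z ≠ x ∧ z ≠ y) :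
    cancelDipole x y σ (cancelDipole x y σ z) = z := by
  obtain ⟨hzx, hzy⟩ := hz
  unfold cancelDipole
  split_ifs <;> grind [Involutive]

theorem cancelDipole_ne_self (hσ : Involutive σ) (hσfix : ∀ z, σ z ≠ z) (hxy : x ≠ y) (z : V) :
    cancelDipole x y σ z ≠ z := by
  unfold cancelDipole
  split_ifs <;> grind [Involutive]

theorem cancelDipole_eq_apply_of_apply_eq (hσ : Involutive σ) (hσxy : σ x = y) (z : V) :
    cancelDipole x y σ z = σ z := by
  unfold cancelDipole
  split_ifs <;> grind [Involutive]

variable {σ' : Perm {z : V // z ≠ x ∧ z ≠ y}}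

theorem mul_self_eq_one_of_cancelDipole (hσ : Involutive σ)
    (hσ' : ∀ z, (σ' z : V) = cancelDipole x y σ z) : σ' * σ' = 1 := by
  ext z
  rw [Perm.mul_apply, hσ', hσ', Perm.one_apply, cancelDipole_cancelDipole hσ z.2]

theorem apply_ne_self_of_cancelDipole (hσ : Involutive σ) (hσfix : ∀ z, σ z ≠ z) (hxy : x ≠ y)
    (hσ' : ∀ z, (σ' z : V) = cancelDipole x y σ z) (z : {z : V // z ≠ x ∧ z ≠ y}) : σ' z ≠ z :=
  fun h => cancelDipole_ne_self hσ hσfix hxy z (by rw [← hσ', h])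

end Dipole

section MergeMk

variable {V : Type*}

open OrbitSpace

open Classical in
noncomputable def mergeMk (S : Set (Perm V)) (x y z : V) : OrbitSpace S :=
  if mk S z = mk S y then mk S x else mk S z

variable {S : Set (Perm V)} {x y : V}

theorem mergeMk_eq_of_mk_eq {z w : V} (h : mk S z = mk S w) :
    mergeMk S x y z = mergeMk S x y w := by
  unfold mergeMk
  rw [h]

theorem mergeMk_left : mergeMk S x y x = mk S x :=
  ite_self _

theorem mergeMk_right : mergeMk S x y y = mk S x :=
  if_pos rfl

theorem mergeMk_of_mk_ne {z : V} (h : mk S z ≠ mk S y) : mergeMk S x y z = mk S z :=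
  if_neg h

theorem mergeMk_of_mk_eq (h : mk S x = mk S y) (z : V) : mergeMk S x y z = mk S z := by
  unfold mergeMk
  split_ifs with hz
  exacts [h.trans hz.symm, rfl]

end MergeMk

section Dihedral

variable {V : Type*} {σ τ : Perm V}

theorem pow_apply_apply_pow_apply (hσ : Involutive σ) (hτ : Involutive τ) (m : ℕ) (z : V) :
    ((τ * σ) ^ m) (σ (((τ * σ) ^ m) z)) = σ z := by
  induction m generalizing z with
  | zero => rfl
  | succ m ih =>
    have hinner : ((τ * σ) ^ (m + 1)) z = ((τ * σ) ^ m) ((τ * σ) z) := by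
      rw [pow_succ, Perm.mul_apply]
    rw [hinner, pow_succ', Perm.mul_apply, ih, Perm.mul_apply, hσ, Perm.mul_apply, hτ]

theorem apply_pow_apply_ne (hσ : Involutive σ) (hτ : Involutive τ) (hσfix : ∀ z, σ z ≠ z)
    (hτfix : ∀ z, τ z ≠ z) (k : ℕ) (z : V) : σ (((τ * σ) ^ k) z) ≠ z := by
  intro h
  obtain ⟨m, rfl | rfl⟩ := Nat.even_or_odd' k
  · rw [two_mul, pow_add, Perm.mul_apply] at h
    have hm := pow_apply_apply_pow_apply hσ hτ m (((τ * σ) ^ m) z)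
    rw [h] at hm
    exact hσfix _ hm.symm
  · rw [show 2 * m + 1 = m + (m + 1) by ring, pow_add, Perm.mul_apply] at h
    have hm := pow_apply_apply_pow_apply hσ hτ m (((τ * σ) ^ (m + 1)) z)
    rw [h, pow_succ', Perm.mul_apply, Perm.mul_apply] at hm
    have hσm := congrArg σ hm
    rw [hσ] at hσm
    exact hτfix _ hσm.symm

end Dihedral

section Correspondence

variable {V : Type*} [DecidableEq V] {x y : V}

open OrbitSpace

theorem mergeMk_cancelDipole {S : Set (Perm V)} {s : Perm V} (hs : s ∈ S) (z : V) :
    mergeMk S x y (cancelDipole x y s z) = mergeMk S x y z := by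
  have hinv : ∀ w, mergeMk S x y (s w) = mergeMk S x y w :=
    fun w => mergeMk_eq_of_mk_eq (mk_apply_of_mem hs w)
  unfold cancelDipole
  split_ifs with h₁ h₂
  · rw [hinv, mergeMk_right, ← hinv z, h₁, mergeMk_left]
  · rw [hinv, mergeMk_left, ← hinv z, h₂, mergeMk_right]
  · exact hinv z

def extendMk (S' : Set (Perm {z : V // z ≠ x ∧ z ≠ y})) (c : OrbitSpace S') (z : V) :
    OrbitSpace S' :=
  if h : z ≠ x ∧ z ≠ y then mk S' ⟨z, h⟩ else c

section ExtendMk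

variable {S' : Set (Perm {z : V // z ≠ x ∧ z ≠ y})} {c : OrbitSpace S'}

theorem extendMk_of_ne {z : V} (hz : z ≠ x ∧ z ≠ y) : extendMk S' c z = mk S' ⟨z, hz⟩ :=
  dif_pos hz

theorem extendMk_val (z : {z : V // z ≠ x ∧ z ≠ y}) : extendMk S' c z = mk S' z :=
  extendMk_of_ne z.2

theorem extendMk_left : extendMk S' c x = c :=
  dif_neg fun h => h.1 rfl

theorem extendMk_right : extendMk S' c y = c :=
  dif_neg fun h => h.2 rfl

variable {s : Perm V} {s' : Perm {z : V // z ≠ x ∧ z ≠ y}}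

theorem extendMk_apply_of_ne (hs' : s' ∈ S') (hcancel : ∀ z, (s' z : V) = cancelDipole x y s z)
    {z : V} (hz : z ≠ x ∧ z ≠ y) (hsz : s z ≠ x ∧ s z ≠ y) :
    extendMk S' c (s z) = extendMk S' c z := by
  have hs'z : s' ⟨z, hz⟩ = ⟨s z, hsz⟩ :=
    Subtype.ext <| by rw [hcancel]; simp [cancelDipole, hsz.1, hsz.2]
  rw [extendMk_of_ne hsz, extendMk_of_ne hz, ← hs'z, mk_apply_of_mem hs']

theorem extendMk_apply (hs : Involutive s) (hs' : s' ∈ S')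
    (hcancel : ∀ z, (s' z : V) = cancelDipole x y s z)
    (hx : extendMk S' c (s x) = c) (hy : extendMk S' c (s y) = c) (z : V) :
    extendMk S' c (s z) = extendMk S' c z := by
  by_cases hz : z ≠ x ∧ z ≠ y
  · by_cases hsz : s z ≠ x ∧ s z ≠ y
    · exact extendMk_apply_of_ne hs' hcancel hz hsz
    · obtain h | h : s z = x ∨ s z = y := by tauto
      · rw [h, extendMk_left, show z = s x by rw [← h, hs], hx]
      · rw [h, extendMk_right, show z = s y by rw [← h, hs], hy]
  · obtain rfl | rfl : z = x ∨ z = y := by tauto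
    · rw [hx, extendMk_left]
    · rw [hy, extendMk_right]

theorem extendMk_mk_apply (hs : Involutive s) (hsfix : ∀ z, s z ≠ z) (hs' : s' ∈ S')
    (hcancel : ∀ z, (s' z : V) = cancelDipole x y s z) (hsx : s x ≠ x ∧ s x ≠ y) (z : V) :
    extendMk S' (mk S' ⟨s x, hsx⟩) (s z) = extendMk S' (mk S' ⟨s x, hsx⟩) z := by
  refine extendMk_apply hs hs' hcancel (extendMk_of_ne hsx) ?_ z
  have hsy : s y ≠ x ∧ s y ≠ y := ⟨fun h => hsx.2 (by rw [← h, hs]), hsfix y⟩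
  have hs'x : s' ⟨s x, hsx⟩ = ⟨s y, hsy⟩ :=
    Subtype.ext <| by rw [hcancel]; simp [cancelDipole, hs x]
  rw [extendMk_of_ne hsy, ← hs'x, mk_apply_of_mem hs']

end ExtendMk

theorem exists_surjective_orbitSpace_comp_eq_mergeMk {S : Set (Perm V)}
    {S' : Set (Perm {z : V // z ≠ x ∧ z ≠ y})}
    (hS' : ∀ s' ∈ S', ∃ s ∈ S, ∀ z, (s' z : V) = cancelDipole x y s z) (c : OrbitSpace S')
    (hc : ∀ s ∈ S, ∀ z, extendMk S' c (s z) = extendMk S' c z)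
    (hcx : ∃ w, c = mk S' w ∧ mk S w = mk S x) :
    ∃ (Φ : OrbitSpace S → OrbitSpace S') (M : OrbitSpace S' → OrbitSpace S),
      Surjective Φ ∧ Φ (mk S x) = Φ (mk S y) ∧ ∀ z, M (Φ (mk S z)) = mergeMk S x y z := by
  refine ⟨lift (extendMk S' c) hc, lift (fun w => mergeMk S x y w) ?_, ?_, ?_, fun z => ?_⟩
  · intro s' hs' w
    obtain ⟨s, hs, hcancel⟩ := hS' s' hs'
    rw [hcancel, mergeMk_cancelDipole hs]
  · intro q
    obtain ⟨w, rfl⟩ := mk_surjective q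
    exact ⟨mk S w, extendMk_val w⟩
  · simp only [lift_mk, extendMk_left, extendMk_right]
  · by_cases hz : z ≠ x ∧ z ≠ y
    · simp only [lift_mk, extendMk_of_ne hz]
    · obtain ⟨w, rfl, hw⟩ := hcx
      obtain rfl | rfl : z = x ∨ z = y := by tauto
      all_goals simp only [lift_mk, extendMk_left, extendMk_right, mergeMk_eq_of_mk_eq hw,
        mergeMk_left, mergeMk_right]

theorem card_orbitSpace_cancelDipole_of_apply_eq {ρ σ : Perm V}
    {ρ' σ' : Perm {z : V // z ≠ x ∧ z ≠ y}} (hρ : Involutive ρ) (hσ : Involutive σ)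
    (hσfix : ∀ z, σ z ≠ z) (hρxy : ρ x = y) (hσxy : σ x ≠ y)
    (hρ' : ∀ z, (ρ' z : V) = cancelDipole x y ρ z) (hσ' : ∀ z, (σ' z : V) = cancelDipole x y σ z) :
    Nat.card (OrbitSpace {ρ', σ'}) = Nat.card (OrbitSpace {ρ, σ}) := by
  have hσx : σ x ≠ x ∧ σ x ≠ y := ⟨hσfix x, hσxy⟩
  have hρyx : ρ y = x := by rw [← hρxy, hρ]
  obtain ⟨Φ, M, hΦ, -, hMΦ⟩ :=
    exists_surjective_orbitSpace_comp_eq_mergeMk (S := {ρ, σ}) (S' := {ρ', σ'})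
      (by rintro _ (rfl | rfl); exacts [⟨ρ, by simp, hρ'⟩, ⟨σ, by simp, hσ'⟩])
      (mk _ ⟨σ x, hσx⟩)
      (by
        rintro _ (rfl | rfl)
        · exact extendMk_apply hρ (by simp) hρ' (by rw [hρxy, extendMk_right])
            (by rw [hρyx, extendMk_left])
        · exact extendMk_mk_apply hσ hσfix (by simp) hσ' hσx)
      ⟨_, rfl, mk_apply_of_mem (by simp) x⟩
  have hxy : mk {ρ, σ} x = mk {ρ, σ} y := by rw [← hρxy, mk_apply_of_mem (by simp)]
  have hMΦ' : LeftInverse M Φ :=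
    mk_surjective.forall.2 fun z => (hMΦ z).trans (mergeMk_of_mk_eq hxy z)
  exact (Nat.card_eq_of_bijective Φ ⟨hMΦ'.injective, hΦ⟩).symm

end Correspondence

section Counting

variable {V : Type*} [DecidableEq V] [Finite V] {x y : V}

open OrbitSpace

theorem extendMk_apply_eq_of_mk_ne {σ τ : Perm V} {σ' τ' : Perm {z : V // z ≠ x ∧ z ≠ y}}
    (hσ : Involutive σ) (hτ : Involutive τ) (hσfix : ∀ z, σ z ≠ z) (hτfix : ∀ z, τ z ≠ z)
    (hσ' : ∀ z, (σ' z : V) = cancelDipole x y σ z) (hτ' : ∀ z, (τ' z : V) = cancelDipole x y τ z)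
    (hxy : mk {σ, τ} x ≠ mk {σ, τ} y) (c : OrbitSpace {σ', τ'}) (p : V) (hp : p = x ∨ p = y) :
    extendMk {σ', τ'} c (σ p) = extendMk {σ', τ'} c (τ p) := by
  set g := τ * σ
  have hne : ∀ v, mk {σ, τ} v = mk {σ, τ} p → v ≠ p → v ≠ x ∧ v ≠ y := by
    intro v hv hvp
    rcases hp with rfl | rfl
    · exact ⟨hvp, fun h => hxy (h ▸ hv).symm⟩
    · exact ⟨fun h => hxy (h ▸ hv), hvp⟩
  have hg : g ∈ Subgroup.closure {σ, τ} :=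
    mul_mem (Subgroup.subset_closure (by simp)) (Subgroup.subset_closure (by simp))
  have hgp : ∀ k, mk {σ, τ} ((g ^ k) p) = mk {σ, τ} p :=
    fun k => mk_apply_of_mem_closure (pow_mem hg k) p
  have hσgp : ∀ k, mk {σ, τ} (σ ((g ^ k) p)) = mk {σ, τ} p :=
    fun k => by rw [mk_apply_of_mem (by simp), hgp]
  -- The walk `σ p, g p, σ (g p), g² p, …` stays in `V'` until it comes back to `p`.
  have hwalk : ∀ k, extendMk {σ', τ'} c (σ ((g ^ k) p)) = extendMk {σ', τ'} c (σ p) := by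
    intro k
    induction k with
    | zero => rfl
    | succ k ih =>
      have hu := hne _ (hσgp k) (apply_pow_apply_ne hσ hτ hσfix hτfix k p)
      have hgu : (g ^ (k + 1)) p = τ (σ ((g ^ k) p)) := by rw [pow_succ', Perm.mul_apply]; rfl
      by_cases hw : (g ^ (k + 1)) p = p
      · rw [hw]
      · have hw' := hne _ (hgp (k + 1)) hw
        have hσw := hne _ (hσgp (k + 1)) (apply_pow_apply_ne hσ hτ hσfix hτfix (k + 1) p)
        rw [extendMk_apply_of_ne (by simp) hσ' hw' hσw, hgu,
          extendMk_apply_of_ne (by simp) hτ' hu (hgu ▸ hw'), ih]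
  obtain ⟨n, hn⟩ : ∃ n, g ^ (n + 1) = 1 :=
    ⟨orderOf g - 1, by
      rw [Nat.sub_add_cancel (isOfFinOrder_of_finite g).orderOf_pos, pow_orderOf_eq_one]⟩
  have hτp : σ ((g ^ n) p) = τ p := by
    have h : τ (σ ((g ^ n) p)) = p := by
      rw [← Perm.mul_apply τ σ, ← Perm.mul_apply, ← pow_succ', hn, Perm.one_apply]
    simpa only [hτ _] using congrArg τ h
  rw [← hτp, hwalk]

theorem card_orbitSpace_cancelDipole_of_mk_ne {σ τ : Perm V}
    {σ' τ' : Perm {z : V // z ≠ x ∧ z ≠ y}} (hσ : Involutive σ) (hτ : Involutive τ)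
    (hσfix : ∀ z, σ z ≠ z) (hτfix : ∀ z, τ z ≠ z) (hxy : mk {σ, τ} x ≠ mk {σ, τ} y)
    (hσ' : ∀ z, (σ' z : V) = cancelDipole x y σ z) (hτ' : ∀ z, (τ' z : V) = cancelDipole x y τ z) :
    Nat.card (OrbitSpace {σ', τ'}) = Nat.card (OrbitSpace {σ, τ}) - 1 := by
  have hσx : σ x ≠ x ∧ σ x ≠ y :=
    ⟨hσfix x, fun h => hxy (by rw [← h, mk_apply_of_mem (by simp)])⟩
  have hσc := extendMk_mk_apply hσ hσfix (Set.mem_insert σ' {τ'}) hσ' hσx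
  have hpath := extendMk_apply_eq_of_mk_ne hσ hτ hσfix hτfix hσ' hτ' hxy (mk _ ⟨σ x, hσx⟩)
  obtain ⟨Φ, M, hΦ, hΦxy, hMΦ⟩ :=
    exists_surjective_orbitSpace_comp_eq_mergeMk (S := {σ, τ}) (S' := {σ', τ'})
      (by rintro _ (rfl | rfl); exacts [⟨σ, by simp, hσ'⟩, ⟨τ, by simp, hτ'⟩])
      (mk _ ⟨σ x, hσx⟩)
      (by
        rintro _ (rfl | rfl)
        · exact hσc
        · exact extendMk_apply hτ (by simp) hτ'
            (by rw [← hpath x (Or.inl rfl), hσc, extendMk_left])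
            (by rw [← hpath y (Or.inr rfl), hσc, extendMk_right]))
      ⟨_, rfl, mk_apply_of_mem (by simp) x⟩
  have hM : Set.LeftInvOn M Φ {mk _ y}ᶜ := fun q hq => by
    obtain ⟨z, rfl⟩ := mk_surjective q
    exact (hMΦ z).trans (mergeMk_of_mk_ne hq)
  exact card_eq_card_sub_one_of_leftInvOn hxy hΦ hΦxy hM

end Counting

/-- Let `(π 0, …, π 4)` encode a regular 5-colored graph on `V`, and let
`x, y ∈ V` with `π j x = y` form a 1-dipole of color `j` (i.e. `x` and `y` lie in
distinct orbits of the subgroup generated by `{π i : i ≠ j}`).  Let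
`(π' 0, …, π' 4)` on `V' = V \ {x, y}` be obtained by cancelling the dipole.  Then
each `π' i` is a fixed-point-free involution of `V'`, and the orbit counts satisfy
`g'_{ab} = g_{ab} − 1` whenever `j ∉ {a, b}` and `g'_{ja} = g_{ja}` for `a ≠ j`. -/
theorem dipole_cancellation_orbit_counts
    {V : Type*} [Fintype V] [DecidableEq V]
    (π : Fin 5 → Equiv.Perm V)
    (hinv : ∀ j, π j * π j = 1)
    (hfpf : ∀ j x, π j x ≠ x)
    (j : Fin 5) (x y : V) (hxy : π j x = y)
    (hdip : y ∉ MulAction.orbit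
      (Subgroup.closure (π '' {i : Fin 5 | i ≠ j})) x)
    (π' : Fin 5 → Equiv.Perm {z : V // z ≠ x ∧ z ≠ y})
    (hπ'j : ∀ z : {z : V // z ≠ x ∧ z ≠ y}, ((π' j) z : V) = π j z)
    (hπ' : ∀ i : Fin 5, i ≠ j → ∀ z : {z : V // z ≠ x ∧ z ≠ y},
      ((π' i) z : V) = if π i z = x then π i y else if π i z = y then π i x
        else π i z) :
    (∀ i, π' i * π' i = 1 ∧ ∀ z, π' i z ≠ z) ∧
    (∀ a b : Fin 5, a ≠ b → a ≠ j → b ≠ j →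
      numOrbits {π' a, π' b} = numOrbits {π a, π b} - 1) ∧
    (∀ a : Fin 5, a ≠ j →
      numOrbits {π' j, π' a} = numOrbits {π j, π a}) := by
  have hinvol : ∀ i, Involutive (π i) := fun i z => by
    rw [← Perm.mul_apply, hinv i, Perm.one_apply]
  have hxy' : x ≠ y := fun h => hfpf j x (hxy.trans h.symm)
  have hcancel : ∀ i z, (π' i z : V) = cancelDipole x y (π i) z := by
    intro i z
    by_cases hi : i = j
    · rw [hi, hπ'j, cancelDipole_eq_apply_of_apply_eq (hinvol j) hxy]
    · exact hπ' i hi z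
  have hgen : ∀ a, a ≠ j → π a ∈ π '' {i | i ≠ j} := fun a ha => ⟨a, ha, rfl⟩
  refine ⟨fun i => ⟨mul_self_eq_one_of_cancelDipole (hinvol i) (hcancel i),
    apply_ne_self_of_cancelDipole (hinvol i) (hfpf i) hxy' (hcancel i)⟩, ?_, ?_⟩
  · intro a b _ ha hb
    exact card_orbitSpace_cancelDipole_of_mk_ne (hinvol a) (hinvol b) (hfpf a) (hfpf b)
      (OrbitSpace.mk_ne_mk_of_notMem_orbit (Set.pair_subset (hgen a ha) (hgen b hb)) hdip)
      (hcancel a) (hcancel b)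
  · intro a ha
    exact card_orbitSpace_cancelDipole_of_apply_eq (hinvol j) (hinvol a) (hfpf a) hxy
      (fun h => hdip ⟨⟨π a, Subgroup.subset_closure (hgen a ha)⟩, h⟩) (hcancel j) (hcancel a)
end

section
/- Let (π_0,…,π_4) encode a regular 5-colored graph on V with |V| = 2p, and let x, y ∈ V with π_j(x) = y form a 1-dipole of color j, i.e. x and y lie in distinct orbits of the subgroup generated by {π_i : i ≠ j}. Let (π'_0,…,π'_4) on V' = V \ {x,y} be the graph obtained by cancelling the dipole (for i ≠ j, π'_i(z) = π_i(y) if π_i(z) = x, π'_i(z) = π_i(x) if π_i(z) = y, and π'_i(z) = π_i(z) otherwise; π'_j is the restriction of π_j). Then |V'| = 2(p−1) and for every bijection ε : ZMod 5 → {0,1,2,3,4} the regular genus is preserved: ρ_ε(π'_0,…,π'_4) = ρ_ε(π_0,…,π_4). -/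
/-! For two fixed-point-free involutions `σ, τ` the orbits of `⟨σ, τ⟩` are the alternating
cycles of the 2-colored graph they define. If neither color is the dipole color `j`, then `x`
and `y` lie on different cycles, and cancelling the dipole splices these two cycles into one,
so `g_ab` drops by one. If `τ = π j`, the edge `x – y` is cut out of its cycle, which survives
because `σ x ≠ y`, so `g_aj` is unchanged. Exactly three of the five consecutive pairs of a
cyclic ordering `ε` avoid `j`, so `Σ g` drops by `3`, as does `3p`.

To count orbits, send the class of `y` onto `x` (`Setoid.collapse`): two vertices of the
cancelled graph are in the same orbit iff their images are. A path between vertices outside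
the classes of `x` and `y` never meets `x` or `y`; the vertices of those classes are all
joined through the neighbours of `x` and `y`, which is where the cycle structure (a parity
argument) enters. -/

open Function Relation MulAction Subgroup

theorem MulAction.orbitRel_closure_le {G α : Type*} [Group G] [MulAction G α] {S : Set G}
    {s : Setoid α} (h : ∀ g ∈ S, ∀ a, s (g • a) a) : orbitRel (closure S) α ≤ s := by
  suffices ∀ g ∈ closure S, ∀ b, s (g • b) b by
    rintro _ b ⟨⟨g, hg⟩, rfl⟩
    exact this g hg b
  intro g hg
  induction hg using closure_induction with
  | mem g hg => exact h g hg
  | one => intro b; rw [one_smul]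
  | mul g k _ _ ihg ihk => intro b; rw [mul_smul]; exact s.trans' (ihg _) (ihk b)
  | inv g _ ihg => intro b; simpa using s.symm' (ihg (g⁻¹ • b))

theorem Relation.ReflTransGen.exists_exit {α : Type*} {R : α → α → Prop} {P : α → Prop}
    {a b : α} (h : ReflTransGen R a b) (ha : ¬ P a) (hb : P b) :
    ∃ d, ¬ P d ∧ ∃ u : Subtype P, R d u ∧
      ReflTransGen (fun u v : Subtype P => R u v) u ⟨b, hb⟩ := by
  induction h with
  | refl => exact absurd hb ha
  | @tail c b _ hcb ih =>
    by_cases hc : P c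
    · obtain ⟨d, hd, u, hdu, hu⟩ := ih hc
      exact ⟨d, hd, u, hdu, hu.tail hcb⟩
    · exact ⟨c, hc, ⟨b, hb⟩, hcb, .refl⟩

theorem Relation.ReflTransGen.subtype_of_forall {α : Type*} {R : α → α → Prop} {P : α → Prop}
    {a b : α} (h : ReflTransGen R a b) (hP : ∀ c, ReflTransGen R a c → P c) :
    ReflTransGen (fun u v : Subtype P => R u v) ⟨a, hP a .refl⟩ ⟨b, hP b h⟩ := by
  induction h with
  | refl => exact .refl
  | tail hac hcb ih => exact ih.tail hcb

theorem Fintype.card_subtype_ne_and_ne {V : Type*} [Fintype V] [DecidableEq V] {x y : V}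
    (hxy : x ≠ y) : Fintype.card {z : V // z ≠ x ∧ z ≠ y} = Fintype.card V - 2 := by
  rw [Fintype.card_subtype]
  have : (Finset.univ.filter fun z : V => z ≠ x ∧ z ≠ y) = {x, y}ᶜ := by ext; simp
  rw [this, Finset.card_compl, Finset.card_pair hxy]

theorem ZMod.card_filter_apply_ne_and_apply_add_one_ne {α : Type*} [DecidableEq α] (n : ℕ)
    [Fact (1 < n)] (e : ZMod n ≃ α) (a : α) :
    (Finset.univ.filter fun i : ZMod n => e i ≠ a ∧ e (i + 1) ≠ a).card = n - 2 := by
  set k := e.symm a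
  have hk : k ≠ k - 1 := fun h => one_ne_zero (sub_eq_self.mp h.symm)
  have : (Finset.univ.filter fun i : ZMod n => e i ≠ a ∧ e (i + 1) ≠ a)
      = Finset.univ \ {k, k - 1} := by
    ext i
    simp [k, ← Equiv.eq_symm_apply, eq_sub_iff_add_eq]
  rw [this, Finset.card_sdiff_of_subset (Finset.subset_univ _), Finset.card_pair hk,
    Finset.card_univ, ZMod.card]

open Classical in
noncomputable def Setoid.collapse {V : Type*} (r : Setoid V) (x y a : V) : V :=
  if r a y then x else a

namespace Setoid

variable {V : Type*} {r : Setoid V} {x y a b : V}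

theorem collapse_of_not_rel (h : ¬ r a y) : r.collapse x y a = a := if_neg h

theorem rel_collapse_of_rel (h : r a x ∨ r a y) : r (r.collapse x y a) x := by
  by_cases hay : r a y
  · rw [collapse, if_pos hay]
  · rw [collapse_of_not_rel hay]; exact h.resolve_right hay

theorem collapse_rel_collapse (h : r a b) : r (r.collapse x y a) (r.collapse x y b) := by
  by_cases hay : r a y
  · rw [collapse, collapse, if_pos hay, if_pos (r.trans' (r.symm' h) hay)]
  · rw [collapse_of_not_rel hay, collapse_of_not_rel fun hby => hay (r.trans' h hby)]
    exact h

theorem collapse_rel_self (hxy : r x y) (a : V) : r (r.collapse x y a) a := by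
  by_cases hay : r a y
  · rw [collapse, if_pos hay]; exact r.trans' hxy (r.symm' hay)
  · rw [collapse_of_not_rel hay]

theorem range_mk_collapse_of_not_rel [DecidableEq V] (hxy : ¬ r x y)
    (s : {z : V // z ≠ x ∧ z ≠ y}) (hs : r s x) :
    (Set.range fun a : {z : V // z ≠ x ∧ z ≠ y} => (⟦r.collapse x y a⟧ : Quotient r))
      = {⟦y⟧}ᶜ := by
  ext c
  induction c using Quotient.inductionOn with | h z => ?_
  simp only [Set.mem_range, Set.mem_compl_singleton_iff, ne_eq, Quotient.eq]
  constructor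
  · rintro ⟨a, ha⟩ hzy
    by_cases hay : r a y
    · rw [collapse, if_pos hay] at ha
      exact hxy (r.trans' ha hzy)
    · rw [collapse_of_not_rel hay] at ha
      exact hay (r.trans' ha hzy)
  · intro hzy
    by_cases hzx : r z x
    · refine ⟨s, ?_⟩
      rw [collapse_of_not_rel fun h => hxy (r.trans' (r.symm' hs) h)]
      exact r.trans' hs (r.symm' hzx)
    · refine ⟨⟨z, fun h => hzx (h ▸ r.refl' _), fun h => hzy (h ▸ r.refl' _)⟩, ?_⟩
      rw [collapse_of_not_rel hzy]

theorem surjective_mk_collapse_of_rel [DecidableEq V] (hxy : r x y)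
    (s : {z : V // z ≠ x ∧ z ≠ y}) (hs : r s x) :
    Surjective fun a : {z : V // z ≠ x ∧ z ≠ y} => (⟦r.collapse x y a⟧ : Quotient r) := by
  intro c
  induction c using Quotient.inductionOn with | h z => ?_
  simp only [Quotient.eq]
  by_cases hz : z ≠ x ∧ z ≠ y
  · exact ⟨⟨z, hz⟩, collapse_rel_self hxy z⟩
  · have hxz : r x z := by
      obtain rfl | rfl : z = x ∨ z = y := by tauto
      exacts [r.refl' z, hxy]
    exact ⟨s, r.trans' (collapse_rel_self hxy s) (r.trans' hs hxz)⟩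

end Setoid

namespace Equiv.Perm

variable {V : Type*} {σ τ ρ : Perm V} {x y : V}

theorem two_dvd_ncard_of_mapsTo [Finite V] (hρ : Involutive ρ) (hρfix : ∀ z, ρ z ≠ z)
    {s : Set V} (hs : Set.MapsTo ρ s s) : 2 ∣ s.ncard := by
  have := Fintype.ofFinite s
  let ρs : Perm s := ρ.subtypePerm fun z => ⟨fun h => hρ z ▸ hs h, fun h => hs h⟩
  have hρs : ρs ^ 2 = 1 := by ext; simp [ρs, sq, hρ _]
  by_contra hodd
  obtain ⟨a, ha⟩ := exists_fixed_point_of_prime (p := 2) (n := 1)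
    (by rwa [← Nat.card_eq_fintype_card, Nat.card_coe_set_eq]) hρs
  exact hρfix a (congrArg Subtype.val ha)

def PairAdj (σ τ : Perm V) (z w : V) : Prop := σ z = w ∨ τ z = w

abbrev pairOrbitRel (σ τ : Perm V) : Setoid V := orbitRel (closure {σ, τ}) V

theorem numOrbits_pair [Fintype V] (σ τ : Perm V) :
    numOrbits {σ, τ} = Nat.card (Quotient (pairOrbitRel σ τ)) := rfl

theorem pairOrbitRel_apply_left (σ τ : Perm V) (z : V) : pairOrbitRel σ τ (σ z) z :=
  ⟨⟨σ, subset_closure (by simp)⟩, rfl⟩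

theorem pairOrbitRel_apply_right (σ τ : Perm V) (z : V) : pairOrbitRel σ τ (τ z) z :=
  ⟨⟨τ, subset_closure (by simp)⟩, rfl⟩

theorem pairOrbitRel_of_pairAdj {z w : V} (h : PairAdj σ τ z w) : pairOrbitRel σ τ w z := by
  rcases h with rfl | rfl
  exacts [pairOrbitRel_apply_left σ τ z, pairOrbitRel_apply_right σ τ z]

theorem pairOrbitRel_iff_reflTransGen (hσ : Involutive σ) (hτ : Involutive τ) {a b : V} :
    pairOrbitRel σ τ a b ↔ ReflTransGen (PairAdj σ τ) a b := by
  have : Std.Symm (PairAdj σ τ) := ⟨by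
    rintro z w (rfl | rfl)
    exacts [Or.inl (hσ z), Or.inr (hτ z)]⟩
  refine ⟨fun h => ?_, fun h => ?_⟩
  · let s : Setoid V := ⟨ReflTransGen (PairAdj σ τ), ⟨fun _ => .refl, symm, .trans⟩⟩
    refine orbitRel_closure_le (s := s) ?_ h
    rintro g (rfl | rfl) z
    exacts [.single (Or.inl (hσ z)), .single (Or.inr (hτ z))]
  · induction h with
    | refl => exact Setoid.refl' _ a
    | tail _ hbc ih => exact Setoid.trans' _ ih (Setoid.symm' _ (pairOrbitRel_of_pairAdj hbc))

theorem reflTransGen_apply_left_apply_right [Finite V] (hσ : Involutive σ) (hτ : Involutive τ)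
    (hσfix : ∀ z, σ z ≠ z) (hτfix : ∀ z, τ z ≠ z) (hxy : ¬ ReflTransGen (PairAdj σ τ) x y)
    (hσx : σ x ≠ x ∧ σ x ≠ y) (hτx : τ x ≠ x ∧ τ x ≠ y) :
    ReflTransGen (fun u v : {z : V // z ≠ x ∧ z ≠ y} => PairAdj σ τ u v)
      ⟨σ x, hσx⟩ ⟨τ x, hτx⟩ := by
  set A : Set V := {z | ∃ hz : z ≠ x ∧ z ≠ y,
    ReflTransGen (fun u v : {z : V // z ≠ x ∧ z ≠ y} => PairAdj σ τ u v) ⟨σ x, hσx⟩ ⟨z, hz⟩}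
  have hA_ne_y {z : V} (hz : z ∈ A) {w : V} (hzw : PairAdj σ τ z w) : w ≠ y := by
    rintro rfl
    obtain ⟨_, hpath⟩ := hz
    have hpath' : ReflTransGen (PairAdj σ τ) (σ x) z :=
      ReflTransGen.lift Subtype.val (fun _ _ h => h) _ _ hpath
    exact hxy ((ReflTransGen.head (show PairAdj σ τ x (σ x) from Or.inl rfl) hpath').tail hzw)
  -- Otherwise `A` is `τ`-invariant and `A ∪ {x}` is `σ`-invariant: both would have even size.
  by_contra hcon
  have hσA : Set.MapsTo σ (insert x A) (insert x A) := by
    rintro z (rfl | hz)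
    · exact Or.inr ⟨hσx, .refl⟩
    · by_cases hσz : σ z = x
      · exact Or.inl hσz
      · obtain ⟨hz', hpath⟩ := hz
        exact Or.inr ⟨⟨hσz, hA_ne_y ⟨hz', hpath⟩ (Or.inl rfl)⟩, hpath.tail (Or.inl rfl)⟩
  have hτA : Set.MapsTo τ A A := by
    rintro z ⟨hz, hpath⟩
    have hτz : τ z ≠ x := by
      rintro h
      obtain rfl : z = τ x := by rw [← h, hτ]
      exact hcon hpath
    exact ⟨⟨hτz, hA_ne_y ⟨hz, hpath⟩ (Or.inr rfl)⟩, hpath.tail (Or.inr rfl)⟩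
  have hxA : x ∉ A := fun ⟨hx, _⟩ => hx.1 rfl
  have h1 := two_dvd_ncard_of_mapsTo hσ hσfix hσA
  have h2 := two_dvd_ncard_of_mapsTo hτ hτfix hτA
  rw [Set.ncard_insert_of_notMem hxA] at h1
  omega

section Cancellation

variable [DecidableEq V] {σ' τ' ρ' : Perm {z : V // z ≠ x ∧ z ≠ y}}

def IsCancellation (x y : V) (σ : Perm V) (σ' : Perm {z : V // z ≠ x ∧ z ≠ y}) : Prop :=
  ∀ z, (σ' z : V) = if σ z = x then σ y else if σ z = y then σ x else σ z

namespace IsCancellation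

variable {z : {z : V // z ≠ x ∧ z ≠ y}}

theorem apply_of_ne (h : IsCancellation x y ρ ρ') (hx : ρ z ≠ x) (hy : ρ z ≠ y) :
    (ρ' z : V) = ρ z := by
  rw [h, if_neg hx, if_neg hy]

theorem apply_of_apply_eq_left (h : IsCancellation x y ρ ρ') (hz : ρ z = x) :
    (ρ' z : V) = ρ y := by
  rw [h, if_pos hz]

theorem apply_of_apply_eq_right (h : IsCancellation x y ρ ρ') (hz : ρ z = y) :
    (ρ' z : V) = ρ x := by
  by_cases hx : ρ z = x
  · obtain rfl : x = y := hx.symm.trans hz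
    exact h.apply_of_apply_eq_left hx
  · rw [h, if_neg hx, if_pos hz]

end IsCancellation

theorem isCancellation_of_apply_eq (hρ : Involutive ρ) (hxy : ρ x = y)
    (h : ∀ z, (ρ' z : V) = ρ z) : IsCancellation x y ρ ρ' := by
  intro z
  have hx : ρ z ≠ x := fun hz => z.2.2 ((hρ.eq_iff.mp hz).trans hxy)
  have hy : ρ z ≠ y := fun hz => z.2.1 (hρ.injective (hz.trans hxy.symm))
  rw [h, if_neg hx, if_neg hy]

theorem pairOrbitRel_of_reflTransGen (hσ' : IsCancellation x y σ σ')
    (hτ' : IsCancellation x y τ τ') {a b : {z : V // z ≠ x ∧ z ≠ y}}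
    (h : ReflTransGen (fun u v : {z : V // z ≠ x ∧ z ≠ y} => PairAdj σ τ u v) a b) :
    pairOrbitRel σ' τ' b a := by
  induction h with
  | refl => exact Setoid.refl' _ a
  | @tail u v _ huv ih =>
    refine Setoid.trans' _ (pairOrbitRel_of_pairAdj ?_) ih
    rcases huv with h | h
    · exact Or.inl (Subtype.ext (by rw [hσ'.apply_of_ne (h ▸ v.2.1) (h ▸ v.2.2), h]))
    · exact Or.inr (Subtype.ext (by rw [hτ'.apply_of_ne (h ▸ v.2.1) (h ▸ v.2.2), h]))

theorem rel_collapse_apply_cancellation {r : Setoid V} (hρ : Involutive ρ)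
    (hρr : ∀ z, r (ρ z) z) (hρ' : IsCancellation x y ρ ρ') (z : {z : V // z ≠ x ∧ z ≠ y}) :
    r (r.collapse x y (ρ' z)) (r.collapse x y z) := by
  by_cases hx : ρ z = x
  · have hz : (z : V) = ρ x := hρ.eq_iff.mp hx
    rw [hρ'.apply_of_apply_eq_left hx]
    refine r.trans' (Setoid.rel_collapse_of_rel (Or.inr (hρr y))) (r.symm' ?_)
    exact Setoid.rel_collapse_of_rel (Or.inl (hz ▸ hρr x))
  by_cases hy : ρ z = y
  · have hz : (z : V) = ρ y := hρ.eq_iff.mp hy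
    rw [hρ'.apply_of_apply_eq_right hy]
    refine r.trans' (Setoid.rel_collapse_of_rel (Or.inl (hρr x))) (r.symm' ?_)
    exact Setoid.rel_collapse_of_rel (Or.inr (hz ▸ hρr y))
  rw [hρ'.apply_of_ne hx hy]
  exact Setoid.collapse_rel_collapse (hρr z)

theorem pairOrbitRel_of_forall_pairAdj {s : {z : V // z ≠ x ∧ z ≠ y}}
    (hσ : Involutive σ) (hτ : Involutive τ)
    (hσ' : IsCancellation x y σ σ') (hτ' : IsCancellation x y τ τ')
    (hnb : ∀ u : {z : V // z ≠ x ∧ z ≠ y}, PairAdj σ τ x u ∨ PairAdj σ τ y u →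
      pairOrbitRel σ' τ' u s)
    (a : {z : V // z ≠ x ∧ z ≠ y}) (ha : pairOrbitRel σ τ a x ∨ pairOrbitRel σ τ a y) :
    pairOrbitRel σ' τ' a s := by
  obtain ⟨d, hd, hda⟩ : ∃ d, (d = x ∨ d = y) ∧ ReflTransGen (PairAdj σ τ) d a := by
    rcases ha with h | h
    exacts [⟨x, Or.inl rfl, (pairOrbitRel_iff_reflTransGen hσ hτ).mp (Setoid.symm' _ h)⟩,
      ⟨y, Or.inr rfl, (pairOrbitRel_iff_reflTransGen hσ hτ).mp (Setoid.symm' _ h)⟩]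
  obtain ⟨d', hd', u, hdu, hua⟩ :=
    hda.exists_exit (P := fun z => z ≠ x ∧ z ≠ y) (fun h => hd.elim h.1 h.2) a.2
  refine Setoid.trans' _ (pairOrbitRel_of_reflTransGen hσ' hτ' hua) (hnb u ?_)
  obtain rfl | rfl : d' = x ∨ d' = y := by tauto
  exacts [Or.inl hdu, Or.inr hdu]

theorem pairOrbitRel_cancel_iff {s : {z : V // z ≠ x ∧ z ≠ y}}
    (hσ : Involutive σ) (hτ : Involutive τ)
    (hσ' : IsCancellation x y σ σ') (hτ' : IsCancellation x y τ τ')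
    (hs : ∀ a : {z : V // z ≠ x ∧ z ≠ y}, pairOrbitRel σ τ a x ∨ pairOrbitRel σ τ a y →
      pairOrbitRel σ' τ' a s)
    (a b : {z : V // z ≠ x ∧ z ≠ y}) :
    pairOrbitRel σ' τ' a b ↔ pairOrbitRel σ τ ((pairOrbitRel σ τ).collapse x y a)
      ((pairOrbitRel σ τ).collapse x y b) := by
  set r := pairOrbitRel σ τ
  refine ⟨fun h => ?_, fun h => ?_⟩
  · refine orbitRel_closure_le
      (s := r.comap fun a : {z : V // z ≠ x ∧ z ≠ y} => r.collapse x y a) ?_ h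
    rintro g (rfl | rfl) z
    exacts [rel_collapse_apply_cancellation hσ (pairOrbitRel_apply_left σ τ) hσ' z,
      rel_collapse_apply_cancellation hτ (pairOrbitRel_apply_right σ τ) hτ' z]
  by_cases ha : r a x ∨ r a y
  · have hb : r b x ∨ r b y := by
      by_contra hb
      rw [not_or] at hb
      rw [Setoid.collapse_of_not_rel hb.2] at h
      exact hb.1 (r.trans' (r.symm' h) (Setoid.rel_collapse_of_rel ha))
    exact Setoid.trans' _ (hs a ha) (Setoid.symm' _ (hs b hb))
  rw [not_or] at ha
  rw [Setoid.collapse_of_not_rel ha.2] at h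
  have hb : ¬ (r b x ∨ r b y) := fun hb => ha.1 (r.trans' h (Setoid.rel_collapse_of_rel hb))
  rw [not_or] at hb
  rw [Setoid.collapse_of_not_rel hb.2] at h
  have hpath := ((pairOrbitRel_iff_reflTransGen hσ hτ).mp h).subtype_of_forall
    (P := fun z => z ≠ x ∧ z ≠ y) fun c hc => by
      rw [← pairOrbitRel_iff_reflTransGen hσ hτ] at hc
      exact ⟨fun hcx => ha.1 (hcx ▸ hc), fun hcy => ha.2 (hcy ▸ hc)⟩
  exact Setoid.symm' _ (pairOrbitRel_of_reflTransGen hσ' hτ' hpath)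

theorem numOrbits_cancel_eq_card_range [Fintype V] {s : {z : V // z ≠ x ∧ z ≠ y}}
    (hσ : Involutive σ) (hτ : Involutive τ)
    (hσ' : IsCancellation x y σ σ') (hτ' : IsCancellation x y τ τ')
    (hs : ∀ a : {z : V // z ≠ x ∧ z ≠ y}, pairOrbitRel σ τ a x ∨ pairOrbitRel σ τ a y →
      pairOrbitRel σ' τ' a s) :
    numOrbits {σ', τ'} = Nat.card (Set.range fun a : {z : V // z ≠ x ∧ z ≠ y} =>
      (⟦(pairOrbitRel σ τ).collapse x y a⟧ : Quotient (pairOrbitRel σ τ))) := by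
  have : pairOrbitRel σ' τ' = (pairOrbitRel σ τ).comap fun a : {z : V // z ≠ x ∧ z ≠ y} =>
      (pairOrbitRel σ τ).collapse x y a :=
    Setoid.ext (pairOrbitRel_cancel_iff hσ hτ hσ' hτ' hs)
  rw [numOrbits_pair, this]
  exact Nat.card_congr (Setoid.comapQuotientEquiv _ _)

theorem numOrbits_eq_numOrbits_cancel_add_one [Fintype V] (hσ : Involutive σ)
    (hτ : Involutive τ) (hσfix : ∀ z, σ z ≠ z) (hτfix : ∀ z, τ z ≠ z)
    (hxy : ¬ pairOrbitRel σ τ x y)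
    (hσ' : IsCancellation x y σ σ') (hτ' : IsCancellation x y τ τ') :
    numOrbits {σ, τ} = numOrbits {σ', τ'} + 1 := by
  have hxy' : ¬ ReflTransGen (PairAdj σ τ) x y := by
    rwa [← pairOrbitRel_iff_reflTransGen hσ hτ]
  have hσx : σ x ≠ x ∧ σ x ≠ y := ⟨hσfix x, fun h => hxy' (.single (Or.inl h))⟩
  have hτx : τ x ≠ x ∧ τ x ≠ y := ⟨hτfix x, fun h => hxy' (.single (Or.inr h))⟩
  have hστ : pairOrbitRel σ' τ' ⟨τ x, hτx⟩ ⟨σ x, hσx⟩ := pairOrbitRel_of_reflTransGen hσ' hτ'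
    (reflTransGen_apply_left_apply_right hσ hτ hσfix hτfix hxy' hσx hτx)
  have hs := pairOrbitRel_of_forall_pairAdj (s := ⟨σ x, hσx⟩) hσ hτ hσ' hτ' <| by
    rintro u ((h | h) | (h | h))
    · obtain rfl : u = ⟨σ x, hσx⟩ := Subtype.ext h.symm
      exact Setoid.refl' _ _
    · obtain rfl : u = ⟨τ x, hτx⟩ := Subtype.ext h.symm
      exact hστ
    · have : σ' ⟨σ x, hσx⟩ = u := Subtype.ext (by rw [hσ'.apply_of_apply_eq_left (hσ x), h])
      exact this ▸ pairOrbitRel_apply_left σ' τ' _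
    · have : τ' ⟨τ x, hτx⟩ = u := Subtype.ext (by rw [hτ'.apply_of_apply_eq_left (hτ x), h])
      exact Setoid.trans' _ (this ▸ pairOrbitRel_apply_right σ' τ' _) hστ
  rw [numOrbits_pair, numOrbits_cancel_eq_card_range hσ hτ hσ' hτ' hs,
    Setoid.range_mk_collapse_of_not_rel hxy ⟨σ x, hσx⟩ (pairOrbitRel_apply_left σ τ x),
    Nat.card_coe_set_eq, Set.compl_eq_univ_sdiff,
    Set.ncard_sdiff_singleton_add_one (Set.mem_univ _), Set.ncard_univ]

theorem numOrbits_eq_numOrbits_cancel_of_apply_eq [Fintype V] (hσ : Involutive σ)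
    (hτ : Involutive τ) (hτxy : τ x = y) (hσx : σ x ≠ x ∧ σ x ≠ y)
    (hσ' : IsCancellation x y σ σ') (hτ' : ∀ z, (τ' z : V) = τ z) :
    numOrbits {σ, τ} = numOrbits {σ', τ'} := by
  have hτ'c := isCancellation_of_apply_eq hτ hτxy hτ'
  have hs := pairOrbitRel_of_forall_pairAdj (s := ⟨σ x, hσx⟩) hσ hτ hσ' hτ'c <| by
    rintro u ((h | h) | (h | h))
    · obtain rfl : u = ⟨σ x, hσx⟩ := Subtype.ext h.symm
      exact Setoid.refl' _ _
    · exact absurd (h.symm.trans hτxy) u.2.2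
    · have : σ' ⟨σ x, hσx⟩ = u := Subtype.ext (by rw [hσ'.apply_of_apply_eq_left (hσ x), h])
      exact this ▸ pairOrbitRel_apply_left σ' τ' _
    · exact absurd (h.symm.trans (hτxy ▸ hτ x)) u.2.1
  have hxy : pairOrbitRel σ τ x y := hτxy ▸ Setoid.symm' _ (pairOrbitRel_apply_right σ τ x)
  rw [numOrbits_pair, numOrbits_cancel_eq_card_range hσ hτ hσ' hτ'c hs,
    Set.range_eq_univ.mpr
      (Setoid.surjective_mk_collapse_of_rel hxy ⟨σ x, hσx⟩ (pairOrbitRel_apply_left σ τ x)),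
    Nat.card_univ]

theorem numOrbits_eq_numOrbits_cancel_add_ite {ι : Type*} [DecidableEq ι] [Fintype V]
    {π : ι → Perm V} {π' : ι → Perm {z : V // z ≠ x ∧ z ≠ y}}
    (hπ : ∀ i, Involutive (π i)) (hπfix : ∀ i z, π i z ≠ z) {j : ι} (hxy : π j x = y)
    (hdip : y ∉ orbit (closure (π '' {i | i ≠ j})) x)
    (hπ'j : ∀ z, (π' j z : V) = π j z) (hπ' : ∀ i, i ≠ j → IsCancellation x y (π i) (π' i))
    {a b : ι} (hab : a ≠ b) :
    numOrbits {π a, π b} = numOrbits {π' a, π' b} + if a ≠ j ∧ b ≠ j then 1 else 0 := by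
  have hne (c : ι) (hc : c ≠ j) : π c x ≠ y := fun h =>
    hdip ⟨⟨π c, subset_closure ⟨c, hc, rfl⟩⟩, h⟩
  by_cases ha : a = j
  · subst ha
    rw [if_neg (by tauto), add_zero, Set.pair_comm, Set.pair_comm (π' a)]
    exact numOrbits_eq_numOrbits_cancel_of_apply_eq (hπ b) (hπ a) hxy
      ⟨hπfix b x, hne b hab.symm⟩ (hπ' b hab.symm) hπ'j
  by_cases hb : b = j
  · subst hb
    rw [if_neg (by tauto), add_zero]
    exact numOrbits_eq_numOrbits_cancel_of_apply_eq (hπ a) (hπ b) hxy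
      ⟨hπfix a x, hne a ha⟩ (hπ' a ha) hπ'j
  have hxy' : ¬ pairOrbitRel (π a) (π b) x y := fun h => by
    obtain ⟨⟨γ, hγ⟩, hγx⟩ := Setoid.symm' _ h
    have hsub : ({π a, π b} : Set (Perm V)) ⊆ π '' {i | i ≠ j} := by
      rintro _ (rfl | rfl)
      exacts [⟨a, ha, rfl⟩, ⟨b, hb, rfl⟩]
    exact hdip ⟨⟨γ, closure_mono hsub hγ⟩, hγx⟩
  rw [if_pos ⟨ha, hb⟩]
  exact numOrbits_eq_numOrbits_cancel_add_one (hπ a) (hπ b) (hπfix a) (hπfix b) hxy'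
    (hπ' a ha) (hπ' b hb)

end Cancellation

end Equiv.Perm

open Equiv.Perm in
/-- Let `(π 0, …, π 4)` encode a regular 5-colored graph on `V` with `|V| = 2p`,
and let `x, y ∈ V` with `π j x = y` form a 1-dipole of color `j`.  Let
`(π' 0, …, π' 4)` on `V' = V \ {x, y}` be the graph obtained by cancelling the
dipole.  Then `|V'| = 2(p − 1)` and for every bijection `ε : ZMod 5 ≃ Fin 5` the
regular genus is preserved: `ρ_ε(π') = ρ_ε(π)`. -/
theorem dipole_cancellation_preserves_regularGenus
    {V : Type*} [Fintype V] [DecidableEq V]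
    (π : Fin 5 → Equiv.Perm V) (p : ℕ)
    (hcard : Fintype.card V = 2 * p)
    (hinv : ∀ j, π j * π j = 1)
    (hfpf : ∀ j x, π j x ≠ x)
    (j : Fin 5) (x y : V) (hxy : π j x = y)
    (hdip : y ∉ MulAction.orbit
      (Subgroup.closure (π '' {i : Fin 5 | i ≠ j})) x)
    (π' : Fin 5 → Equiv.Perm {z : V // z ≠ x ∧ z ≠ y})
    (hπ'j : ∀ z : {z : V // z ≠ x ∧ z ≠ y}, ((π' j) z : V) = π j z)
    (hπ' : ∀ i : Fin 5, i ≠ j → ∀ z : {z : V // z ≠ x ∧ z ≠ y},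
      ((π' i) z : V) = if π i z = x then π i y else if π i z = y then π i x
        else π i z)
    (g g' : Fin 5 → Fin 5 → ℕ)
    (hg : ∀ a b, g a b = numOrbits {π a, π b})
    (hg' : ∀ a b, g' a b = numOrbits {π' a, π' b})
    (ρ ρ' : (ZMod 5 → Fin 5) → ℚ)
    (hρ : ∀ f : ZMod 5 → Fin 5,
      2 - 2 * ρ f = (∑ i : ZMod 5, (g (f i) (f (i + 1)) : ℚ)) - 3 * (p : ℚ))
    (hρ' : ∀ f : ZMod 5 → Fin 5,
      2 - 2 * ρ' f = (∑ i : ZMod 5, (g' (f i) (f (i + 1)) : ℚ))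
        - 3 * ((p : ℚ) - 1)) :
    Fintype.card {z : V // z ≠ x ∧ z ≠ y} = 2 * (p - 1) ∧
    ∀ ε : ZMod 5 ≃ Fin 5, ρ' ⇑ε = ρ ⇑ε := by
  have hπ (i : Fin 5) : Involutive (π i) := fun z => congr($(hinv i) z)
  refine ⟨?_, fun ε => ?_⟩
  · rw [Fintype.card_subtype_ne_and_ne fun h => hfpf j x (hxy.trans h.symm), hcard]
    omega
  have : Fact (1 < 5) := ⟨by norm_num⟩
  have hstep (i : ZMod 5) : g (ε i) (ε (i + 1)) = g' (ε i) (ε (i + 1))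
      + if ε i ≠ j ∧ ε (i + 1) ≠ j then 1 else 0 := by
    rw [hg, hg']
    exact numOrbits_eq_numOrbits_cancel_add_ite hπ hfpf hxy hdip hπ'j hπ'
      (ε.injective.ne (by simp))
  have hsum : ∑ i : ZMod 5, (g (ε i) (ε (i + 1)) : ℚ)
      = ∑ i : ZMod 5, (g' (ε i) (ε (i + 1)) : ℚ) + 3 := by
    simp_rw [hstep]
    push_cast
    rw [Finset.sum_add_distrib, Finset.sum_boole, ZMod.card_filter_apply_ne_and_apply_add_one_ne]
    norm_num
  linarith [hρ ε, hρ' ε]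
end
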